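/- arXiv:1609.01671 — 10 statements merged into one kernel-verified Lean document; each statement's English description precedes it below -/
import Mathlib

section
/- Let q ≥ 0 and r > 0 be reals, and let W, V : ℝ → ℝ be Borel measurable, locally bounded functions that vanish on (−∞,0) and satisfy the convolution identity V(x) = W(x) + r·∫₀ˣ V(x−y)·W(y) dy for every x ≥ 0. Then for every a < 0 and every x ∈ ℝ, W(x−a) + r·∫₀ˣ V(x−y)·W(y−a) dy = V(x−a) − r·∫₀^{−a} V(x−a−u)·W(u) du. -/
open MeasureTheory Filter Set

/-!
Substituting `y ↦ y + a` turns the left-hand integral into `∫_{-a}^{x-a} V(x - a - u) W(u) du`,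
the convolution integral over `[0, x - a]` minus its part over `[0, -a]`. The convolution
identity at `x - a` then gives the claim. For `x - a < 0` that identity holds trivially,
since `V` and `W` vanish on `(-∞, 0)`.
-/

lemma intervalIntegrable_of_measurable_of_abs_le {f : ℝ → ℝ} (hf : Measurable f) {s t C : ℝ}
    (h : ∀ y ∈ uIcc s t, |f y| ≤ C) : IntervalIntegrable f volume s t :=
  (intervalIntegrable_const (c := C)).mono_fun' hf.aestronglyMeasurable
    (ae_restrict_of_forall_mem measurableSet_uIoc fun y hy => h y (uIoc_subset_uIcc hy))

lemma intervalIntegrable_mul_comp_sub {V W : ℝ → ℝ} (hVm : Measurable V) (hWm : Measurable W)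
    (hVloc : ∀ K : Set ℝ, IsCompact K → ∃ C, ∀ x ∈ K, |V x| ≤ C)
    (hWloc : ∀ K : Set ℝ, IsCompact K → ∃ C, ∀ x ∈ K, |W x| ≤ C) (c s t : ℝ) :
    IntervalIntegrable (fun y => V (c - y) * W y) volume s t := by
  obtain ⟨CV, hCV⟩ := hVloc _ (isCompact_uIcc.image (continuous_sub_left c))
  obtain ⟨CW, hCW⟩ := hWloc _ isCompact_uIcc
  refine intervalIntegrable_of_measurable_of_abs_le (f := fun y => V (c - y) * W y)
    (C := CV * CW) (by fun_prop) fun y hy => ?_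
  have hV : |V (c - y)| ≤ CV := hCV _ ⟨y, hy, rfl⟩
  rw [abs_mul]
  exact mul_le_mul hV (hCW y hy) (abs_nonneg _) ((abs_nonneg _).trans hV)

lemma convolution_identity_of_neg {r : ℝ} {W V : ℝ → ℝ}
    (hW0 : ∀ x < 0, W x = 0) (hV0 : ∀ x < 0, V x = 0) {x : ℝ} (hx : x < 0) :
    V x = W x + r * ∫ y in (0:ℝ)..x, V (x - y) * W y := by
  have hint : (∫ y in (0:ℝ)..x, V (x - y) * W y) = ∫ _ in (0:ℝ)..x, (0:ℝ) := by
    refine intervalIntegral.integral_congr_ae (ae_of_all _ fun y hy => ?_)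
    rw [uIoc_of_ge hx.le] at hy
    rw [hV0 _ (by linarith [hy.1]), zero_mul]
  rw [hint, intervalIntegral.integral_zero, hV0 x hx, hW0 x hx]
  ring

lemma integral_mul_comp_sub_shift (V W : ℝ → ℝ) (a x : ℝ) :
    (∫ y in (0:ℝ)..x, V (x - y) * W (y - a))
      = ∫ u in (-a)..(x - a), V (x - a - u) * W u := by
  rw [← zero_sub, ← intervalIntegral.integral_comp_sub_right]
  congr 1 with y
  ring_nf

theorem stmt_0_general (r : ℝ) (W V : ℝ → ℝ)
    (hWm : Measurable W) (hVm : Measurable V)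
    (hWloc : ∀ K : Set ℝ, IsCompact K → ∃ C, ∀ x ∈ K, |W x| ≤ C)
    (hVloc : ∀ K : Set ℝ, IsCompact K → ∃ C, ∀ x ∈ K, |V x| ≤ C)
    (hW0 : ∀ x < 0, W x = 0) (hV0 : ∀ x < 0, V x = 0)
    (hconv : ∀ x ≥ (0:ℝ), V x = W x + r * ∫ y in (0:ℝ)..x, V (x - y) * W y) :
    ∀ a < 0, ∀ x : ℝ,
      W (x - a) + r * ∫ y in (0:ℝ)..x, V (x - y) * W (y - a)
        = V (x - a) - r * ∫ u in (0:ℝ)..(-a), V (x - a - u) * W u := by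
  intro a _ x
  have hconv' : V (x - a) = W (x - a) + r * ∫ y in (0:ℝ)..(x - a), V (x - a - y) * W y := by
    rcases le_or_gt 0 (x - a) with hxa | hxa
    · exact hconv _ hxa
    · exact convolution_identity_of_neg hW0 hV0 hxa
  have hint := intervalIntegrable_mul_comp_sub hVm hWm hVloc hWloc (x - a) 0
  rw [integral_mul_comp_sub_shift, ← intervalIntegral.integral_interval_sub_left (hint _) (hint _),
    hconv']
  ring

/-- alternative representation of `W_a^{(q,r)}`. -/
theorem stmt_0 (q r : ℝ) (hq : 0 ≤ q) (hr : 0 < r) (W V : ℝ → ℝ)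
    (hWm : Measurable W) (hVm : Measurable V)
    (hWloc : ∀ K : Set ℝ, IsCompact K → ∃ C, ∀ x ∈ K, |W x| ≤ C)
    (hVloc : ∀ K : Set ℝ, IsCompact K → ∃ C, ∀ x ∈ K, |V x| ≤ C)
    (hW0 : ∀ x < 0, W x = 0) (hV0 : ∀ x < 0, V x = 0)
    (hconv : ∀ x ≥ (0:ℝ), V x = W x + r * ∫ y in (0:ℝ)..x, V (x - y) * W y) :
    ∀ a < 0, ∀ x : ℝ,
      W (x - a) + r * ∫ y in (0:ℝ)..x, V (x - y) * W (y - a)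
        = V (x - a) - r * ∫ u in (0:ℝ)..(-a), V (x - a - u) * W u :=
  stmt_0_general r W V hWm hVm hWloc hVloc hW0 hV0 hconv
end

section
/- Let r > 0, Φ ≥ 0 and c ∈ (0,∞) be reals. Let W : ℝ → ℝ vanish on (−∞,0), be nonnegative, and be such that x ↦ e^{−Φx}·W(x) is nondecreasing on (0,∞) and converges to c as x → ∞. Let V : ℝ → ℝ be nonnegative, vanish on (−∞,0), and be integrable on compact intervals. Then for every x ∈ ℝ, lim_{a → −∞} [W(x−a) + r·∫₀ˣ V(x−y)·W(y−a) dy] / W(−a) = e^{Φx}·(1 + r·∫₀ˣ e^{−Φz}·V(z) dz). -/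
/-!
Write `W t = exp (Φ t) g t` with `g t → c > 0`. Then
`W (y - a) / W (-a) = exp (Φ y) g (y - a) / g (-a)` tends to `exp (Φ y)` as `a → -∞`, and since
`g ∈ [c/2, 2c]` near `+∞` it is eventually bounded by `4 exp (Φ y)` uniformly in `y ≥ min 0 x`.
Dominated convergence moves the limit under the integral, and the substitution `z = x - y`
identifies the result.
-/

open MeasureTheory Filter Set Real Topology

lemma div_comp_sub_eq_exp_mul (W : ℝ → ℝ) (Φ a b : ℝ) :
    W (b - a) / W (-a) =
      exp (Φ * b) * ((exp (-Φ * (b - a)) * W (b - a)) / (exp (-Φ * -a) * W (-a))) := by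
  rw [mul_div_mul_comm, ← mul_assoc, ← exp_sub, ← exp_add,
    show Φ * b + (-Φ * (b - a) - -Φ * -a) = 0 by ring, exp_zero, one_mul]

section

variable {W : ℝ → ℝ} {Φ c : ℝ}

lemma aemeasurable_of_monotoneOn_exp_neg_mul
    (hmono : MonotoneOn (fun t => exp (-Φ * t) * W t) (Ioi 0)) :
    AEMeasurable W (volume.restrict (Ioi 0)) := by
  have hg := aemeasurable_restrict_of_monotoneOn (μ := volume) measurableSet_Ioi hmono
  have hW : W = fun t => exp (Φ * t) * (exp (-Φ * t) * W t) := funext fun t => by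
    rw [← mul_assoc, ← exp_add, show Φ * t + -Φ * t = 0 by ring, exp_zero, one_mul]
  rw [hW]
  exact (measurable_exp.comp (measurable_const_mul Φ)).aemeasurable.mul hg

lemma aestronglyMeasurable_comp_sub_restrict (hW : AEMeasurable W (volume.restrict (Ioi 0)))
    {a : ℝ} {s : Set ℝ} (hs : s ⊆ Ioi a) :
    AEStronglyMeasurable (fun y => W (y - a)) (volume.restrict s) := by
  have hshift :=
    (measurePreserving_sub_right volume a).restrict_preimage (measurableSet_Ioi (a := 0))
  have : (fun y => y - a) ⁻¹' Ioi 0 = Ioi a := by ext y; simp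
  rw [this] at hshift
  exact (hW.aestronglyMeasurable.comp_measurePreserving hshift).mono_measure
    (Measure.restrict_mono hs le_rfl)

lemma tendsto_div_comp_sub (hc : c ≠ 0)
    (hW : Tendsto (fun t => exp (-Φ * t) * W t) atTop (𝓝 c)) (b : ℝ) :
    Tendsto (fun a => W (b - a) / W (-a)) atBot (𝓝 (exp (Φ * b))) := by
  have hsub : Tendsto (fun a : ℝ => b - a) atBot atTop :=
    tendsto_atTop_add_const_left atBot b tendsto_neg_atBot_atTop |>.congr fun a => by ring
  have := ((hW.comp hsub).div (hW.comp tendsto_neg_atBot_atTop) hc).const_mul (exp (Φ * b))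
  rw [div_self hc, mul_one] at this
  exact this.congr fun a => (div_comp_sub_eq_exp_mul W Φ a b).symm

lemma eventually_norm_div_comp_sub_le (hc : 0 < c)
    (hW : Tendsto (fun t => exp (-Φ * t) * W t) atTop (𝓝 c)) (L : ℝ) :
    ∀ᶠ a in atBot, ∀ y, L ≤ y → ‖W (y - a) / W (-a)‖ ≤ 4 * exp (Φ * y) := by
  obtain ⟨T, hT⟩ := eventually_atTop.mp <| hW.eventually (Icc_mem_nhds (by linarith : c / 2 < c)
    (by linarith : c < 2 * c))
  filter_upwards [eventually_le_atBot (min (L - T) (-T))] with a ha y hy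
  obtain ⟨hden, -⟩ := hT (-a) (by linarith [min_le_right (L - T) (-T)])
  obtain ⟨hnum_pos, hnum⟩ := hT (y - a) (by linarith [min_le_left (L - T) (-T)])
  rw [div_comp_sub_eq_exp_mul W Φ a y, norm_mul, norm_of_nonneg (exp_pos _).le, mul_comm]
  gcongr
  rw [norm_div, norm_of_nonneg (by linarith), norm_of_nonneg (by linarith),
    div_le_iff₀ (by linarith)]
  linarith

lemma tendsto_intervalIntegral_mul_div_comp_sub (hc : 0 < c)
    (hWm : AEMeasurable W (volume.restrict (Ioi 0)))
    (hW : Tendsto (fun t => exp (-Φ * t) * W t) atTop (𝓝 c))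
    {f : ℝ → ℝ} {u v : ℝ} (hf : IntervalIntegrable f volume u v) :
    Tendsto (fun a => ∫ y in u..v, f y * (W (y - a) / W (-a))) atBot
      (𝓝 (∫ y in u..v, f y * exp (Φ * y))) := by
  refine intervalIntegral.tendsto_integral_filter_of_dominated_convergence
    (fun y => ‖f y‖ * (4 * exp (Φ * y))) ?_ ?_ ?_ ?_
  · filter_upwards [eventually_lt_atBot (min u v)] with a ha
    have hWa : AEStronglyMeasurable (fun y => W (y - a)) (volume.restrict (uIoc u v)) :=
      aestronglyMeasurable_comp_sub_restrict hWm fun y hy => ha.trans hy.1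
    exact hf.def'.aestronglyMeasurable.mul (hWa.mul_const (W (-a))⁻¹)
  · filter_upwards [eventually_norm_div_comp_sub_le hc hW (min u v)] with a ha
    refine Eventually.of_forall fun y hy => ?_
    rw [norm_mul]
    gcongr
    exact ha y hy.1.le
  · exact hf.norm.mul_continuousOn (by fun_prop)
  · exact Eventually.of_forall fun y _ => (tendsto_div_comp_sub hc.ne' hW y).const_mul (f y)

end

lemma intervalIntegral_comp_sub_mul_exp (V : ℝ → ℝ) (Φ x : ℝ) :
    ∫ y in (0:ℝ)..x, V (x - y) * exp (Φ * y) =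
      exp (Φ * x) * ∫ z in (0:ℝ)..x, exp (-Φ * z) * V z := by
  have h := intervalIntegral.integral_comp_sub_left
    (fun z => exp (Φ * x) * (exp (-Φ * z) * V z)) (a := 0) (b := x) x
  rw [sub_self, sub_zero] at h
  rw [← intervalIntegral.integral_const_mul, ← h]
  congr 1 with y
  rw [← mul_assoc, ← exp_add, mul_comm, show Φ * x + -Φ * (x - y) = Φ * y by ring]

theorem stmt_1_general (r Φ c : ℝ) (hc : 0 < c)
    (W V : ℝ → ℝ)
    (hWmono : MonotoneOn (fun x => Real.exp (-Φ * x) * W x) (Set.Ioi 0))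
    (hWlim : Tendsto (fun x => Real.exp (-Φ * x) * W x) atTop (nhds c))
    (hVint : ∀ x y : ℝ, IntervalIntegrable V volume x y) :
    ∀ x : ℝ,
      Tendsto (fun a => (W (x - a) + r * ∫ y in (0:ℝ)..x, V (x - y) * W (y - a)) / W (-a))
        atBot
        (nhds (Real.exp (Φ * x) * (1 + r * ∫ z in (0:ℝ)..x, Real.exp (-Φ * z) * V z))) := by
  intro x
  have hVx : IntervalIntegrable (fun y => V (x - y)) volume 0 x := by
    simpa using ((hVint 0 x).comp_sub_left x).symm
  have hlim := (tendsto_div_comp_sub hc.ne' hWlim x).add <|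
    (tendsto_intervalIntegral_mul_div_comp_sub hc
      (aemeasurable_of_monotoneOn_exp_neg_mul hWmono) hWlim hVx).const_mul r
  rw [mul_one_add, mul_left_comm, ← intervalIntegral_comp_sub_mul_exp]
  refine hlim.congr fun a => ?_
  rw [add_div, mul_div_assoc, ← intervalIntegral.integral_div]
  simp only [mul_div_assoc]

/-- Lemma B.1(i), convergence of `W_a^{(q,r)}(x)/W^{(q)}(-a)` as `a → -∞`. -/
theorem stmt_1 (r Φ c : ℝ) (hr : 0 < r) (hΦ : 0 ≤ Φ) (hc : 0 < c)
    (W V : ℝ → ℝ)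
    (hW0 : ∀ x < 0, W x = 0) (hWnn : ∀ x, 0 ≤ W x)
    (hWmono : MonotoneOn (fun x => Real.exp (-Φ * x) * W x) (Set.Ioi 0))
    (hWlim : Tendsto (fun x => Real.exp (-Φ * x) * W x) atTop (nhds c))
    (hVnn : ∀ x, 0 ≤ V x) (hV0 : ∀ x < 0, V x = 0)
    (hVint : ∀ x y : ℝ, IntervalIntegrable V volume x y) :
    ∀ x : ℝ,
      Tendsto (fun a => (W (x - a) + r * ∫ y in (0:ℝ)..x, V (x - y) * W (y - a)) / W (-a))
        atBot
        (nhds (Real.exp (Φ * x) * (1 + r * ∫ z in (0:ℝ)..x, Real.exp (-Φ * z) * V z))) :=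
  stmt_1_general r Φ c hc W V hWmono hWlim hVint
end

section
/- Let q ≥ 0, r > 0, Φ′ > 0 and c′ ∈ (0,∞) be reals. Let W, V : ℝ → ℝ be nonnegative, Borel measurable, locally bounded functions vanishing on (−∞,0) that satisfy the convolution identity V(x) = W(x) + r·∫₀ˣ V(x−y)·W(y) dy for every x ≥ 0, and suppose x ↦ e^{−Φ′x}·V(x) is nondecreasing on (0,∞) and converges to c′ as x → ∞. Then for every a < 0, lim_{b→∞} [W(b−a) + r·∫₀ᵇ V(b−y)·W(y−a) dy] / V(b) = e^{−Φ′a}·(1 − r·∫₀^{−a} e^{−Φ′u}·W(u) du). -/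
open MeasureTheory Filter Set

private lemma locBdd_intervalIntegrable {f : ℝ → ℝ} (hm : Measurable f)
    (hloc : ∀ K : Set ℝ, IsCompact K → ∃ C, ∀ x ∈ K, |f x| ≤ C) (c d : ℝ) :
    IntervalIntegrable f volume c d := by
  obtain ⟨C, hC⟩ := hloc (Set.uIcc c d) isCompact_uIcc
  refine (intervalIntegrable_const (c := C)).mono_fun' hm.aestronglyMeasurable ?_
  refine (ae_restrict_iff' measurableSet_uIoc).2 (Filter.Eventually.of_forall fun x hx => ?_)
  simpa [Real.norm_eq_abs] using hC x (Set.uIoc_subset_uIcc hx)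

private lemma VW_intervalIntegrable (V W : ℝ → ℝ) (hVm : Measurable V) (hWm : Measurable W)
    (hVloc : ∀ K : Set ℝ, IsCompact K → ∃ C, ∀ x ∈ K, |V x| ≤ C)
    (hWloc : ∀ K : Set ℝ, IsCompact K → ∃ C, ∀ x ∈ K, |W x| ≤ C) (b' c d : ℝ) :
    IntervalIntegrable (fun t => V (b' - t) * W t) volume c d := by
  apply locBdd_intervalIntegrable
  · exact (hVm.comp (measurable_const.sub measurable_id)).mul hWm
  · intro K hK
    obtain ⟨C1, hC1⟩ := hVloc ((fun t => b' - t) '' K) (hK.image (by continuity))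
    obtain ⟨C2, hC2⟩ := hWloc K hK
    refine ⟨|C1| * |C2|, fun x hx => ?_⟩
    rw [abs_mul]
    exact mul_le_mul ((hC1 _ (Set.mem_image_of_mem _ hx)).trans (le_abs_self _))
      ((hC2 _ hx).trans (le_abs_self _)) (abs_nonneg _) (abs_nonneg _)

/-- Lemma B.1(ii), convergence of `W_a^{(q,r)}(b)/W^{(q+r)}(b)` as `b → ∞`. -/
theorem stmt_2 (q r Φ' c' : ℝ) (hq : 0 ≤ q) (hr : 0 < r) (hΦ' : 0 < Φ') (hc' : 0 < c')
    (W V : ℝ → ℝ) (hWnn : ∀ x, 0 ≤ W x) (hVnn : ∀ x, 0 ≤ V x)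
    (hWm : Measurable W) (hVm : Measurable V)
    (hWloc : ∀ K : Set ℝ, IsCompact K → ∃ C, ∀ x ∈ K, |W x| ≤ C)
    (hVloc : ∀ K : Set ℝ, IsCompact K → ∃ C, ∀ x ∈ K, |V x| ≤ C)
    (hW0 : ∀ x < 0, W x = 0) (hV0 : ∀ x < 0, V x = 0)
    (hconv : ∀ x ≥ (0:ℝ), V x = W x + r * ∫ y in (0:ℝ)..x, V (x - y) * W y)
    (hVmono : MonotoneOn (fun x => Real.exp (-Φ' * x) * V x) (Set.Ioi 0))
    (hVlim : Tendsto (fun x => Real.exp (-Φ' * x) * V x) atTop (nhds c')) :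
    ∀ a < 0,
      Tendsto (fun b => (W (b - a) + r * ∫ y in (0:ℝ)..b, V (b - y) * W (y - a)) / V b)
        atTop
        (nhds (Real.exp (-Φ' * a) *
          (1 - r * ∫ u in (0:ℝ)..(-a), Real.exp (-Φ' * u) * W u))) := by
  intro a ha
  set g : ℝ → ℝ := fun x => Real.exp (-Φ' * x) * V x with hgdef
  -- (A) g ≤ c' on (0, ∞)
  have hgle : ∀ x > (0:ℝ), g x ≤ c' := by
    intro x hx
    refine ge_of_tendsto hVlim ?_
    filter_upwards [eventually_ge_atTop x, eventually_gt_atTop (0:ℝ)] with b hbx hb0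
    exact hVmono hx hb0 hbx
  -- (B) eventual lower bound
  have hev : ∀ᶠ b in atTop, c' / 2 < g b :=
    hVlim.eventually (eventually_gt_nhds (by linarith))
  -- (C) ratio limit
  have hratio : ∀ t : ℝ, Tendsto (fun b => V (b + t) / V b) atTop (nhds (Real.exp (Φ' * t))) := by
    intro t
    have h1 : Tendsto (fun b => g (b + t)) atTop (nhds c') :=
      hVlim.comp (tendsto_atTop_add_const_right atTop t tendsto_id)
    have h2 : Tendsto (fun b => g (b + t) / g b * Real.exp (Φ' * t)) atTop
        (nhds (Real.exp (Φ' * t))) := by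
      have := (h1.div hVlim (ne_of_gt hc')).mul_const (Real.exp (Φ' * t))
      simpa [div_self (ne_of_gt hc')] using this
    refine h2.congr fun b => ?_
    have hexp : Real.exp (-Φ' * (b + t)) / Real.exp (-Φ' * b) = Real.exp (-(Φ' * t)) := by
      rw [← Real.exp_sub]; congr 1; ring
    calc g (b + t) / g b * Real.exp (Φ' * t)
        = (Real.exp (-Φ' * (b + t)) / Real.exp (-Φ' * b)) * (V (b + t) / V b) *
            Real.exp (Φ' * t) := by rw [hgdef, mul_div_mul_comm]
      _ = V (b + t) / V b := by
          rw [hexp, Real.exp_neg, mul_comm (Real.exp (Φ' * t))⁻¹, mul_assoc,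
            inv_mul_cancel₀ (Real.exp_ne_zero _), mul_one]
  -- (D) numerator identity for b ≥ 0
  have hnum : ∀ b ≥ (0:ℝ),
      W (b - a) + r * ∫ y in (0:ℝ)..b, V (b - y) * W (y - a)
        = V (b - a) - r * ∫ t in (0:ℝ)..(-a), V (b - a - t) * W t := by
    intro b hb
    have hsub : (∫ y in (0:ℝ)..b, V (b - y) * W (y - a))
        = ∫ t in (0 - a)..(b - a), V (b - a - t) * W t := by
      rw [← intervalIntegral.integral_comp_sub_right (fun t => V (b - a - t) * W t) a]
      apply intervalIntegral.integral_congr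
      intro y _
      simp only [show ∀ y : ℝ, b - a - (y - a) = b - y from fun y => by ring]
    have hI1 : IntervalIntegrable (fun t => V (b - a - t) * W t) volume 0 (-a) :=
      VW_intervalIntegrable V W hVm hWm hVloc hWloc (b - a) 0 (-a)
    have hI2 : IntervalIntegrable (fun t => V (b - a - t) * W t) volume (-a) (b - a) :=
      VW_intervalIntegrable V W hVm hWm hVloc hWloc (b - a) (-a) (b - a)
    have hadj := intervalIntegral.integral_add_adjacent_intervals hI1 hI2
    have hc := hconv (b - a) (by linarith)
    have hmid : (∫ t in (-a)..(b - a), V (b - a - t) * W t)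
        = (∫ t in (0:ℝ)..(b - a), V (b - a - t) * W t)
          - ∫ t in (0:ℝ)..(-a), V (b - a - t) * W t := by linarith [hadj]
    rw [hsub, zero_sub, hmid, hc]
    ring
  -- main limits
  have T1 : Tendsto (fun b => V (b - a) / V b) atTop (nhds (Real.exp (Φ' * (-a)))) := by
    refine (hratio (-a)).congr fun b => ?_
    rw [← sub_eq_add_neg]
  have T2 : Tendsto (fun b => ∫ u in (0:ℝ)..(-a), V (b - a - u) * W u / V b) atTop
      (nhds (∫ u in (0:ℝ)..(-a), Real.exp (Φ' * (-a - u)) * W u)) := by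
    apply intervalIntegral.tendsto_integral_filter_of_dominated_convergence
      (bound := fun u => 2 * Real.exp (Φ' * (-a)) * W u)
    · filter_upwards with b
      exact (((hVm.comp (measurable_const.sub measurable_id)).mul hWm).div_const
        (V b)).aestronglyMeasurable
    · filter_upwards [hev, eventually_ge_atTop (1:ℝ)] with b hgb hb1
      refine Filter.Eventually.of_forall fun u hu => ?_
      rw [Set.uIoc_of_le (by linarith : (0:ℝ) ≤ -a)] at hu
      obtain ⟨hu0, hua⟩ := hu
      have hbau : (0:ℝ) < b - a - u := by linarith
      have hgb' : c' / 2 < Real.exp (-Φ' * b) * V b := hgb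
      have e1 : Real.exp (-Φ' * b) * Real.exp (Φ' * b) = 1 := by
        rw [← Real.exp_add, show -Φ' * b + Φ' * b = 0 by ring, Real.exp_zero]
      have hVb : (c' / 2) * Real.exp (Φ' * b) < V b := by
        calc c' / 2 * Real.exp (Φ' * b)
            < (Real.exp (-Φ' * b) * V b) * Real.exp (Φ' * b) :=
              mul_lt_mul_of_pos_right hgb' (Real.exp_pos _)
          _ = V b := by rw [mul_comm (Real.exp (-Φ' * b)) (V b), mul_assoc, e1, mul_one]
      have hVbpos : (0:ℝ) < V b :=
        lt_trans (by positivity) hVb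
      have hVtop : V (b - a - u) ≤ c' * Real.exp (Φ' * (b - a)) := by
        have h1 := hgle (b - a - u) hbau
        have e2 : Real.exp (-Φ' * (b - a - u)) * Real.exp (Φ' * (b - a - u)) = 1 := by
          rw [← Real.exp_add, show -Φ' * (b - a - u) + Φ' * (b - a - u) = 0 by ring,
            Real.exp_zero]
        have hrw : V (b - a - u)
            = (Real.exp (-Φ' * (b - a - u)) * V (b - a - u)) * Real.exp (Φ' * (b - a - u)) := by
          rw [mul_comm (Real.exp (-Φ' * (b - a - u))) (V (b - a - u)), mul_assoc, e2, mul_one]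
        have h2 : V (b - a - u) ≤ c' * Real.exp (Φ' * (b - a - u)) := by
          rw [hrw]
          exact mul_le_mul_of_nonneg_right h1 (Real.exp_pos _).le
        refine h2.trans (mul_le_mul_of_nonneg_left ?_ hc'.le)
        exact Real.exp_le_exp.2 (by nlinarith [mul_pos hΦ' hu0])
      have key : c' * Real.exp (Φ' * (b - a))
          = 2 * Real.exp (Φ' * (-a)) * (c' / 2 * Real.exp (Φ' * b)) := by
        rw [show Φ' * (b - a) = Φ' * (-a) + Φ' * b by ring, Real.exp_add]
        ring
      have hratio_le : V (b - a - u) / V b ≤ 2 * Real.exp (Φ' * (-a)) := by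
        rw [div_le_iff₀ hVbpos]
        calc V (b - a - u) ≤ c' * Real.exp (Φ' * (b - a)) := hVtop
          _ = 2 * Real.exp (Φ' * (-a)) * (c' / 2 * Real.exp (Φ' * b)) := key
          _ ≤ 2 * Real.exp (Φ' * (-a)) * V b :=
              mul_le_mul_of_nonneg_left hVb.le (by positivity)
      have hnonneg : 0 ≤ V (b - a - u) * W u / V b :=
        div_nonneg (mul_nonneg (hVnn _) (hWnn _)) hVbpos.le
      rw [Real.norm_eq_abs, abs_of_nonneg hnonneg, mul_div_right_comm]
      exact mul_le_mul_of_nonneg_right hratio_le (hWnn u)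
    · exact (locBdd_intervalIntegrable hWm hWloc 0 (-a)).const_mul _
    · refine Filter.Eventually.of_forall fun u _ => ?_
      have := (hratio (-a - u)).mul_const (W u)
      refine this.congr fun b => ?_
      rw [show b + (-a - u) = b - a - u by ring, mul_div_right_comm]
  have hEq : Real.exp (-Φ' * a) * (1 - r * ∫ u in (0:ℝ)..(-a), Real.exp (-Φ' * u) * W u)
      = Real.exp (Φ' * (-a)) - r * ∫ u in (0:ℝ)..(-a), Real.exp (Φ' * (-a - u)) * W u := by
    have h1 : ∀ u : ℝ, Real.exp (Φ' * (-a - u)) * W u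
        = Real.exp (-Φ' * a) * (Real.exp (-Φ' * u) * W u) := by
      intro u; rw [← mul_assoc, ← Real.exp_add]; congr 2; ring
    rw [intervalIntegral.integral_congr
        (g := fun u => Real.exp (-Φ' * a) * (Real.exp (-Φ' * u) * W u)) fun u _ => h1 u,
      intervalIntegral.integral_const_mul, show Φ' * (-a) = -Φ' * a by ring]
    ring
  rw [hEq]
  refine Tendsto.congr' ?_ (T1.sub (T2.const_mul r))
  filter_upwards [eventually_ge_atTop (0:ℝ)] with b hb
  rw [hnum b hb, sub_div, mul_div_assoc, intervalIntegral.integral_div]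
end

section
/- Let q ≥ 0, r > 0, Φ′ > 0, 0 ≤ θ < Φ′, p ∈ ℝ and a < 0 be reals. Let W : ℝ → ℝ be nonnegative, Borel measurable, vanish on (−∞,0), and satisfy ∫₀^∞ e^{−Φ′z}·W(z) dz = 1/r. Define Z(x,θ) := e^{θx}·(1 + (q−p)·∫₀ˣ e^{−θz}W(z)dz) and Z(x,Φ′) := e^{Φ′x}·(1 − r·∫₀ˣ e^{−Φ′z}W(z)dz). Then r·∫₀^∞ e^{−Φ′y}·Z(y−a,θ) dy = [r·Z(−a,θ) + (q−p)·Z(−a,Φ′)] / (Φ′−θ). -/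
/-!
With `b = -a` and `c = Φ' - θ`, the integrand is `e^{θb} e^{-cy} (1 + (q - p) G(y + b))` where
`G(x) = ∫₀ˣ e^{-θz} W(z) dz`, so everything reduces to `∫₀^∞ e^{-cy} G(y + b) dy`. By Tonelli on
`{0 < z < y + b}` this equals `c⁻¹ ∫₀^∞ e^{-c (z - b)⁺} e^{-θz} W(z) dz`, which splits at `b` into
`G(b)` and `e^{cb} ∫_b^∞ e^{-Φ'z} W(z) dz = e^{cb} (1/r - ∫₀ᵇ e^{-Φ'z} W(z) dz)`.
The swap is done for lintegrals, where it needs no integrability; finiteness of the result then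
gives integrability of the real integrand.
-/

open MeasureTheory Set Real ENNReal

theorem lintegral_Ioi_mul_lintegral_Ioo_add {f g : ℝ → ℝ≥0∞} (hf : Measurable f)
    (hg : Measurable g) (s t b : ℝ) :
    ∫⁻ y in Ioi s, f y * ∫⁻ z in Ioo t (y + b), g z
      = ∫⁻ z in Ioi t, (∫⁻ y in Ioi (max (z - b) s), f y) * g z := by
  set F : ℝ × ℝ → ℝ≥0∞ := {p | p.2 < p.1 + b}.indicator fun p => f p.1 * g p.2
  have hF : Measurable F :=
    ((hf.comp measurable_fst).mul (hg.comp measurable_snd)).indicator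
      (measurableSet_lt measurable_snd (measurable_fst.add_const b))
  have hrow : ∀ y, f y * ∫⁻ z in Ioo t (y + b), g z = ∫⁻ z in Ioi t, F (y, z) := by
    intro y
    rw [← lintegral_const_mul _ hg, ← Ioi_inter_Iio, inter_comm,
      ← Measure.restrict_restrict measurableSet_Iio,
      ← lintegral_indicator measurableSet_Iio]
    rfl
  have hcol : ∀ z, (∫⁻ y in Ioi (max (z - b) s), f y) * g z = ∫⁻ y in Ioi s, F (y, z) := by
    intro z
    rw [← lintegral_mul_const _ hf, ← Ioi_inter_Ioi, ← Measure.restrict_restrict measurableSet_Ioi,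
      ← lintegral_indicator measurableSet_Ioi]
    congr with y
    simp only [F, indicator_apply, mem_Ioi, mem_ofPred_eq, sub_lt_iff_lt_add, add_comm]
  simp_rw [hrow, hcol]
  exact lintegral_lintegral_swap (hF.comp measurable_id).aemeasurable

theorem lintegral_ofReal_exp_neg_mul_Ioi {c : ℝ} (hc : 0 < c) (t : ℝ) :
    ∫⁻ y in Ioi t, ENNReal.ofReal (exp (-c * y)) = ENNReal.ofReal (exp (-c * t) / c) := by
  rw [← ofReal_integral_eq_lintegral_ofReal (exp_neg_integrableOn_Ioi t hc)
    (ae_of_all _ fun _ => (exp_pos _).le), integral_exp_mul_Ioi (by linarith) t, neg_div_neg_eq]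

theorem integrableOn_Ioc_of_integrableOn_exp_mul {c : ℝ} {g : ℝ → ℝ}
    (h : IntegrableOn (fun z => exp (-c * z) * g z) (Ioi 0)) (x : ℝ) :
    IntegrableOn g (Ioc 0 x) := by
  refine ((h.mono_set Ioc_subset_Ioi_self).continuousOn_mul_of_subset
    (g := fun z => exp (c * z)) (by fun_prop) isCompact_Icc measurableSet_Ioc
    Ioc_subset_Icc_self).congr_fun (fun z _ => ?_) measurableSet_Ioc
  simp only [← mul_assoc, ← exp_add]
  simp

theorem setIntegral_Ioi_eq_sub_setIntegral_Ioc {E : Type*} [NormedAddCommGroup E]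
    [NormedSpace ℝ E] {f : ℝ → E} {a b : ℝ} (hab : a ≤ b) (hf : IntegrableOn f (Ioi a)) :
    ∫ z in Ioi b, f z = (∫ z in Ioi a, f z) - ∫ z in Ioc a b, f z := by
  rw [← Ioc_union_Ioi_eq_Ioi hab, setIntegral_union Ioc_disjoint_Ioi_same measurableSet_Ioi
    (hf.mono_set Ioc_subset_Ioi_self) (hf.mono_set (Ioi_subset_Ioi hab)), add_sub_cancel_left]

section LaplaceShift

variable {c b : ℝ} {g : ℝ → ℝ}

theorem lintegral_ofReal_exp_neg_mul_integral_Ioo_add (hc : 0 < c) (hb : 0 ≤ b)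
    (hg : Measurable g) (hg0 : ∀ z, 0 ≤ g z)
    (hint : IntegrableOn (fun z => exp (-c * z) * g z) (Ioi 0)) :
    ∫⁻ y in Ioi 0, ENNReal.ofReal (exp (-c * y) * ∫ z in Ioo 0 (y + b), g z)
      = ENNReal.ofReal
          (((∫ z in Ioc 0 b, g z) + exp (c * b) * ∫ z in Ioi b, exp (-c * z) * g z) / c) := by
  have hloc := integrableOn_Ioc_of_integrableOn_exp_mul hint
  calc ∫⁻ y in Ioi 0, ENNReal.ofReal (exp (-c * y) * ∫ z in Ioo 0 (y + b), g z)
      = ∫⁻ y in Ioi 0, ENNReal.ofReal (exp (-c * y))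
          * ∫⁻ z in Ioo 0 (y + b), ENNReal.ofReal (g z) := by
        refine lintegral_congr fun y => ?_
        rw [ofReal_mul (exp_pos _).le, ofReal_integral_eq_lintegral_ofReal
          ((hloc _).mono_set Ioo_subset_Ioc_self) (ae_of_all _ hg0)]
    _ = ∫⁻ z in Ioi 0, ENNReal.ofReal (exp (-c * max (z - b) 0) / c) * ENNReal.ofReal (g z) := by
        rw [lintegral_Ioi_mul_lintegral_Ioo_add (by fun_prop) hg.ennreal_ofReal]
        simp_rw [lintegral_ofReal_exp_neg_mul_Ioi hc]
    _ = (∫⁻ z in Ioc 0 b, ENNReal.ofReal (g z / c))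
          + ∫⁻ z in Ioi b, ENNReal.ofReal (exp (c * b) / c * (exp (-c * z) * g z)) := by
        rw [← Ioc_union_Ioi_eq_Ioi hb, lintegral_union measurableSet_Ioi Ioc_disjoint_Ioi_same]
        congr 1
        · refine setLIntegral_congr_fun measurableSet_Ioc fun z hz => ?_
          rw [max_eq_right (by linarith [hz.2]), ← ofReal_mul (by positivity)]
          simp [div_eq_inv_mul]
        · refine setLIntegral_congr_fun measurableSet_Ioi fun z hz => ?_
          rw [max_eq_left (by linarith [mem_Ioi.1 hz]), ← ofReal_mul (by positivity)]
          congr 1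
          rw [mul_sub, exp_sub, neg_mul c b, exp_neg, div_inv_eq_mul]
          ring
    _ = _ := by
        rw [← ofReal_integral_eq_lintegral_ofReal ((hloc b).div_const c)
            (ae_of_all _ fun z => div_nonneg (hg0 z) hc.le),
          ← ofReal_integral_eq_lintegral_ofReal ((hint.mono_set (Ioi_subset_Ioi hb)).const_mul _)
            (ae_of_all _ fun z => by have := hg0 z; positivity),
          ← ofReal_add, integral_div, integral_const_mul]
        · congr 1
          ring
        all_goals exact integral_nonneg fun z => by have := hg0 z; positivity

theorem integrableOn_exp_neg_mul_integral_Ioo_add (hc : 0 < c) (hb : 0 ≤ b)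
    (hg : Measurable g) (hg0 : ∀ z, 0 ≤ g z)
    (hint : IntegrableOn (fun z => exp (-c * z) * g z) (Ioi 0)) :
    IntegrableOn (fun y => exp (-c * y) * ∫ z in Ioo 0 (y + b), g z) (Ioi 0) := by
  have hmono : Monotone fun y => ∫ z in Ioo 0 (y + b), g z := fun y y' hyy' =>
    setIntegral_mono_set ((integrableOn_Ioc_of_integrableOn_exp_mul hint _).mono_set
      Ioo_subset_Ioc_self) (ae_of_all _ hg0)
      (Ioo_subset_Ioo_right (by linarith)).eventuallyLE
  refine ⟨(by fun_prop : Measurable fun y => exp (-c * y)).mul hmono.measurable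
    |>.aestronglyMeasurable, ?_⟩
  rw [hasFiniteIntegral_iff_ofReal, lintegral_ofReal_exp_neg_mul_integral_Ioo_add hc hb hg hg0 hint]
  · exact ofReal_lt_top
  · exact ae_of_all _ fun y =>
      mul_nonneg (exp_pos _).le (setIntegral_nonneg measurableSet_Ioo fun z _ => hg0 z)

theorem integral_exp_neg_mul_integral_Ioo_add (hc : 0 < c) (hb : 0 ≤ b)
    (hg : Measurable g) (hg0 : ∀ z, 0 ≤ g z)
    (hint : IntegrableOn (fun z => exp (-c * z) * g z) (Ioi 0)) :
    ∫ y in Ioi 0, exp (-c * y) * ∫ z in Ioo 0 (y + b), g z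
      = ((∫ z in Ioc 0 b, g z) + exp (c * b) * ∫ z in Ioi b, exp (-c * z) * g z) / c := by
  rw [integral_eq_lintegral_of_nonneg_ae _
      (integrableOn_exp_neg_mul_integral_Ioo_add hc hb hg hg0 hint).aestronglyMeasurable,
    lintegral_ofReal_exp_neg_mul_integral_Ioo_add hc hb hg hg0 hint, toReal_ofReal]
  · exact div_nonneg (add_nonneg (setIntegral_nonneg measurableSet_Ioc fun z _ => hg0 z)
      (mul_nonneg (exp_pos _).le (setIntegral_nonneg measurableSet_Ioi fun z _ =>
        mul_nonneg (exp_pos _).le (hg0 z)))) hc.le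
  · exact ae_of_all _ fun y =>
      mul_nonneg (exp_pos _).le (setIntegral_nonneg measurableSet_Ioo fun z _ => hg0 z)

theorem integral_exp_neg_mul_one_add_mul_integral_Ioo_add (hc : 0 < c) (hb : 0 ≤ b)
    (hg : Measurable g) (hg0 : ∀ z, 0 ≤ g z)
    (hint : IntegrableOn (fun z => exp (-c * z) * g z) (Ioi 0)) (κ : ℝ) :
    ∫ y in Ioi 0, exp (-c * y) * (1 + κ * ∫ z in Ioo 0 (y + b), g z)
      = (1 + κ * ((∫ z in Ioc 0 b, g z) + exp (c * b) * ∫ z in Ioi b, exp (-c * z) * g z)) / c := by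
  simp_rw [mul_add, mul_one, mul_left_comm _ κ]
  rw [integral_add (exp_neg_integrableOn_Ioi 0 hc)
      ((integrableOn_exp_neg_mul_integral_Ioo_add hc hb hg hg0 hint).const_mul κ),
    integral_const_mul, integral_exp_neg_mul_integral_Ioo_add hc hb hg hg0 hint,
    integral_exp_mul_Ioi (by linarith), mul_zero, exp_zero]
  ring

end LaplaceShift

theorem stmt_3_general (q r Φ' θ p a : ℝ) (hr : 0 < r)
    (hθΦ' : θ < Φ') (ha : a < 0)
    (W : ℝ → ℝ) (hWnn : ∀ x, 0 ≤ W x) (hWm : Measurable W)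
    (hWlap : (∫ z in Set.Ioi (0:ℝ), Real.exp (-Φ' * z) * W z) = 1 / r)
    (Zθ ZΦ' : ℝ → ℝ)
    (hZθ : ∀ x, Zθ x
      = Real.exp (θ * x) * (1 + (q - p) * ∫ z in (0:ℝ)..x, Real.exp (-θ * z) * W z))
    (hZΦ' : ∀ x, ZΦ' x
      = Real.exp (Φ' * x) * (1 - r * ∫ z in (0:ℝ)..x, Real.exp (-Φ' * z) * W z)) :
    r * ∫ y in Set.Ioi (0:ℝ), Real.exp (-Φ' * y) * Zθ (y - a)
      = (r * Zθ (-a) + (q - p) * ZΦ' (-a)) / (Φ' - θ) := by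
  have hb : 0 ≤ -a := by linarith
  have hc : 0 < Φ' - θ := sub_pos.2 hθΦ'
  have hexp : ∀ z, exp (-(Φ' - θ) * z) * (exp (-θ * z) * W z) = exp (-Φ' * z) * W z :=
    fun z => by rw [← mul_assoc, ← exp_add]; ring_nf
  have hWint : IntegrableOn (fun z => exp (-Φ' * z) * W z) (Ioi 0) :=
    Integrable.of_integral_ne_zero (by rw [hWlap]; positivity)
  have hint : IntegrableOn (fun z => exp (-(Φ' - θ) * z) * (exp (-θ * z) * W z)) (Ioi 0) := by
    simpa only [hexp] using hWint
  have hg : Measurable fun z => exp (-θ * z) * W z := by fun_prop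
  have hg0 : ∀ z, 0 ≤ exp (-θ * z) * W z := fun z => mul_nonneg (exp_pos _).le (hWnn z)
  have hintegrand : EqOn (fun y => exp (-Φ' * y) * Zθ (y - a))
      (fun y => exp (θ * -a) * (exp (-(Φ' - θ) * y)
        * (1 + (q - p) * ∫ z in Ioo 0 (y + -a), exp (-θ * z) * W z))) (Ioi 0) := by
    intro y hy
    dsimp only
    rw [hZθ, intervalIntegral.integral_of_le (by linarith [mem_Ioi.1 hy]),
      integral_Ioc_eq_integral_Ioo, sub_eq_add_neg, ← mul_assoc, ← mul_assoc, ← exp_add,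
      ← exp_add]
    ring_nf
  rw [setIntegral_congr_fun measurableSet_Ioi hintegrand, integral_const_mul,
    integral_exp_neg_mul_one_add_mul_integral_Ioo_add hc hb hg hg0 hint, hZθ, hZΦ',
    intervalIntegral.integral_of_le hb, intervalIntegral.integral_of_le hb]
  simp only [hexp, setIntegral_Ioi_eq_sub_setIntegral_Ioc hb hWint, hWlap]
  have hexp_split : exp (Φ' * -a) = exp (θ * -a) * exp ((Φ' - θ) * -a) := by
    rw [← exp_add]; ring_nf
  rw [hexp_split]
  field_simp
  ring

/-- Fubini computation at the core of Lemma B.1(iii):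
`r·∫₀^∞ e^{−Φ′y} Z(y−a,θ) dy = Z̃^{(q,r)}(−a,θ)`. -/
theorem stmt_3 (q r Φ' θ p a : ℝ) (hq : 0 ≤ q) (hr : 0 < r) (hΦ' : 0 < Φ')
    (hθ : 0 ≤ θ) (hθΦ' : θ < Φ') (ha : a < 0)
    (W : ℝ → ℝ) (hWnn : ∀ x, 0 ≤ W x) (hWm : Measurable W)
    (hW0 : ∀ x < 0, W x = 0)
    (hWlap : (∫ z in Set.Ioi (0:ℝ), Real.exp (-Φ' * z) * W z) = 1 / r)
    (Zθ ZΦ' : ℝ → ℝ)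
    (hZθ : ∀ x, Zθ x
      = Real.exp (θ * x) * (1 + (q - p) * ∫ z in (0:ℝ)..x, Real.exp (-θ * z) * W z))
    (hZΦ' : ∀ x, ZΦ' x
      = Real.exp (Φ' * x) * (1 - r * ∫ z in (0:ℝ)..x, Real.exp (-Φ' * z) * W z)) :
    r * ∫ y in Set.Ioi (0:ℝ), Real.exp (-Φ' * y) * Zθ (y - a)
      = (r * Zθ (-a) + (q - p) * ZΦ' (-a)) / (Φ' - θ) :=
  stmt_3_general q r Φ' θ p a hr hθΦ' ha W hWnn hWm hWlap Zθ ZΦ' hZθ hZΦ'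
end

section
/- Let q ≥ 0, r > 0, reals 0 ≤ θ < Φ < Φ′, p ≤ q, c, c′ ∈ (0,∞), and a < 0. Let W : ℝ → ℝ be nonnegative, Borel measurable, vanish on (−∞,0), satisfy W(z) ≤ c·e^{Φz} for all z ≥ 0 and ∫₀^∞ e^{−Φ′z}W(z)dz = 1/r. Let V : ℝ → ℝ be nonnegative, vanish on (−∞,0), with x ↦ e^{−Φ′x}·V(x) nondecreasing on (0,∞) and converging to c′ as x → ∞. With Z(x,θ) := e^{θx}(1+(q−p)∫₀ˣ e^{−θz}W(z)dz) and Z(x,Φ′) := e^{Φ′x}(1−r∫₀ˣ e^{−Φ′z}W(z)dz), one has lim_{b→∞} [Z(b−a,θ) + r·∫₀ᵇ V(b−y)·Z(y−a,θ) dy] / V(b) = [r·Z(−a,θ) + (q−p)·Z(−a,Φ′)]/(Φ′−θ). -/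
open MeasureTheory Filter Set

open Topology Real

/-!
Write `V x = exp (Φ' x) g x`, where `g` is monotone with limit `c'`, and
`u y = exp (-Φ' y) Z (y - a, θ)`. Dividing by `V b`, the quotient becomes
`(u b + r ∫₀ᵇ g (b - y) u y dy) / g b`. Since `|Z (x, θ)| ≤ C exp (Φ x)` with `Φ < Φ'`,
`u` decays exponentially, so by dominated convergence the quotient tends to `r ∫₀^∞ u`.
This Laplace transform is computed by Fubini: with `k = Φ' - θ` and `f z = exp (-θ z) W z`,
`∫₀^∞ exp (-k y) ∫₀^{y-a} f = (∫₀^{-a} f + exp (-k a) ∫_{-a}^∞ exp (-k z) f z dz) / k`,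
and the tail `∫_{-a}^∞ exp (-Φ' z) W z dz = 1 / r - ∫₀^{-a} exp (-Φ' z) W z dz`
produces `Z (-a, Φ')`.
-/

theorem tendsto_intervalIntegral_comp_sub_mul {G u : ℝ → ℝ} {c M : ℝ}
    (hGm : AEStronglyMeasurable G (volume.restrict (Ioi 0))) (hGb : ∀ x > 0, |G x| ≤ M)
    (hG : Tendsto G atTop (𝓝 c)) (hu : IntegrableOn u (Ioi 0)) :
    Tendsto (fun b => ∫ y in 0..b, G (b - y) * u y) atTop (𝓝 (c * ∫ y in Ioi 0, u y)) := by
  have hM : 0 ≤ M := (abs_nonneg _).trans (hGb 1 one_pos)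
  have hconv : ∀ b, 0 ≤ b → ∫ y in 0..b, G (b - y) * u y
      = ∫ y in Ioi 0, (Iio b).indicator (fun y => G (b - y) * u y) y := fun b hb => by
    rw [setIntegral_indicator measurableSet_Iio, Ioi_inter_Iio, intervalIntegral.integral_of_le hb,
      integral_Ioc_eq_integral_Ioo]
  rw [← integral_const_mul]
  refine (tendsto_integral_filter_of_dominated_convergence (fun y => M * ‖u y‖)
    (F := fun b y => (Iio b).indicator (fun y => G (b - y) * u y) y) ?_ ?_
    (hu.norm.const_mul M) ?_).congr' ?_
  · refine Eventually.of_forall fun b => ?_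
    rw [aestronglyMeasurable_indicator_iff measurableSet_Iio,
      Measure.restrict_restrict measurableSet_Iio]
    have hshift : AEStronglyMeasurable (fun y => G (b - y)) (volume.restrict (Iio b)) := by
      have hmp := (Measure.measurePreserving_sub_left volume b).restrict_preimage
        (measurableSet_Ioi (a := (0:ℝ)))
      have hpre : (fun y => b - y) ⁻¹' Ioi 0 = Iio b := by ext; simp
      rw [hpre] at hmp
      exact hGm.comp_measurePreserving hmp
    exact (hshift.mono_set inter_subset_left).mul (hu.1.mono_set inter_subset_right)
  · refine Eventually.of_forall fun b => ?_
    filter_upwards [ae_restrict_mem measurableSet_Ioi] with y hy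
    by_cases hyb : y < b
    · rw [indicator_of_mem (mem_Iio.2 hyb), norm_mul, Real.norm_eq_abs (G _)]
      exact mul_le_mul_of_nonneg_right (hGb _ (sub_pos.2 hyb)) (norm_nonneg _)
    · rw [indicator_of_notMem (fun h => hyb (mem_Iio.1 h)), norm_zero]
      positivity
  · filter_upwards [ae_restrict_mem measurableSet_Ioi] with y hy
    have hshift : Tendsto (fun b => b - y) atTop atTop :=
      tendsto_atTop_add_const_right _ _ tendsto_id
    refine ((hG.comp hshift).mul_const (u y)).congr' ?_
    filter_upwards [eventually_gt_atTop y] with b hb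
    simp [indicator_of_mem (mem_Iio.2 hb)]
  · filter_upwards [eventually_ge_atTop 0] with b hb using (hconv b hb).symm

theorem integral_Ioi_indicator_Ici_exp {k : ℝ} (hk : 0 < k) (t : ℝ) :
    ∫ y in Ioi 0, (Ici t).indicator (fun y => exp (-k * y)) y = exp (-k * max 0 t) / k := by
  rw [setIntegral_indicator measurableSet_Ici]
  rcases le_or_gt t 0 with ht | ht
  · rw [inter_eq_left.2 (Ioi_subset_Ici ht), max_eq_left ht, integral_exp_mul_Ioi (by linarith),
      neg_div_neg_eq]
  · rw [inter_eq_right.2 (Ici_subset_Ioi.2 ht), max_eq_right ht.le, integral_Ici_eq_integral_Ioi,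
      integral_exp_mul_Ioi (by linarith), neg_div_neg_eq]

section PrimitiveLaplace

variable {f : ℝ → ℝ} {k a : ℝ}

theorem integrableOn_exp_max_mul (ha : a ≤ 0) (hf : IntegrableOn f (Ioc 0 (-a)))
    (hfk : IntegrableOn (fun z => exp (-k * z) * f z) (Ioi (-a))) :
    IntegrableOn (fun z => exp (-k * max 0 (z + a)) * f z) (Ioi 0) := by
  rw [← Ioc_union_Ioi_eq_Ioi (neg_nonneg.2 ha)]
  refine IntegrableOn.union (hf.congr_fun (fun z hz => ?_) measurableSet_Ioc)
    (IntegrableOn.congr_fun (hfk.const_mul (exp (-k * a))) (fun z hz => ?_) measurableSet_Ioi)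
  · rw [max_eq_left (by linarith [hz.2]), mul_zero, exp_zero, one_mul]
  · rw [max_eq_right (by linarith [mem_Ioi.1 hz]), ← mul_assoc, ← exp_add]
    ring_nf

theorem integral_exp_max_mul (ha : a ≤ 0) (hf : IntegrableOn f (Ioc 0 (-a)))
    (hfk : IntegrableOn (fun z => exp (-k * z) * f z) (Ioi (-a))) :
    ∫ z in Ioi 0, exp (-k * max 0 (z + a)) * f z
      = (∫ z in 0..(-a), f z) + exp (-k * a) * ∫ z in Ioi (-a), exp (-k * z) * f z := by
  have hint := integrableOn_exp_max_mul ha hf hfk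
  rw [← intervalIntegral.integral_interval_add_Ioi'
    ((intervalIntegrable_iff_integrableOn_Ioc_of_le (neg_nonneg.2 ha)).2
      (hint.mono_set Ioc_subset_Ioi_self)) (hint.mono_set (Ioi_subset_Ioi (neg_nonneg.2 ha))),
    ← integral_const_mul]
  congr 1
  · refine intervalIntegral.integral_congr fun z hz => ?_
    rw [uIcc_of_le (neg_nonneg.2 ha)] at hz
    rw [max_eq_left (by linarith [hz.2]), mul_zero, exp_zero, one_mul]
  · refine setIntegral_congr_fun measurableSet_Ioi fun z hz => ?_
    rw [max_eq_right (by linarith [mem_Ioi.1 hz]), ← mul_assoc, ← exp_add]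
    ring_nf

noncomputable def primitiveKernel (f : ℝ → ℝ) (k a : ℝ) (p : ℝ × ℝ) : ℝ :=
  (Ici (p.2 + a)).indicator (fun y => exp (-k * y)) p.1 * f p.2

theorem integral_primitiveKernel_fst (hk : 0 < k) (z : ℝ) :
    ∫ y in Ioi 0, primitiveKernel f k a (y, z) = exp (-k * max 0 (z + a)) * f z / k := by
  simp only [primitiveKernel]
  rw [integral_mul_const, integral_Ioi_indicator_Ici_exp hk, div_mul_eq_mul_div]

theorem integral_primitiveKernel_snd {y : ℝ} (ha : a ≤ 0) (hy : 0 < y) :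
    ∫ z in Ioi 0, primitiveKernel f k a (y, z) = exp (-k * y) * ∫ z in 0..(y - a), f z := by
  have hsection : (fun z => primitiveKernel f k a (y, z))
      = fun z => exp (-k * y) * (Iic (y - a)).indicator f z := by
    ext z
    simp only [primitiveKernel, indicator_apply, mem_Ici, mem_Iic, ← le_sub_iff_add_le]
    split_ifs <;> simp
  rw [hsection, integral_const_mul, setIntegral_indicator measurableSet_Iic, Ioi_inter_Iic,
    intervalIntegral.integral_of_le (by linarith)]

theorem integrable_primitiveKernel (hk : 0 < k) (ha : a ≤ 0) (hf : IntegrableOn f (Ioc 0 (-a)))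
    (hfk : IntegrableOn (fun z => exp (-k * z) * f z) (Ioi (-a))) :
    Integrable (primitiveKernel f k a)
      ((volume.restrict (Ioi 0)).prod (volume.restrict (Ioi 0))) := by
  have hψ := integrableOn_exp_max_mul ha hf hfk
  have hfm : AEStronglyMeasurable f (volume.restrict (Ioi 0)) := by
    have hexp : Continuous fun z => exp (k * max 0 (z + a)) := by fun_prop
    refine (hexp.aestronglyMeasurable.mul hψ.1).congr (ae_of_all _ fun z => ?_)
    rw [Pi.mul_apply, ← mul_assoc, ← exp_add]
    ring_nf; simp
  have hset : MeasurableSet {p : ℝ × ℝ | p.2 + a ≤ p.1} :=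
    measurableSet_le (measurable_snd.add_const a) measurable_fst
  have hexp : Continuous fun p : ℝ × ℝ => exp (-k * p.1) := by fun_prop
  have hm : AEStronglyMeasurable (primitiveKernel f k a)
      ((volume.restrict (Ioi 0)).prod (volume.restrict (Ioi 0))) := by
    refine ((hexp.aestronglyMeasurable.indicator hset).mul hfm.comp_snd).congr
      (ae_of_all _ fun p => ?_)
    by_cases h : p.2 + a ≤ p.1 <;> simp [primitiveKernel, h]
  refine (integrable_prod_iff' hm).2 ⟨ae_of_all _ fun z => ?_, ?_⟩
  · simp only [primitiveKernel]
    exact ((exp_neg_integrableOn_Ioi 0 hk).indicator measurableSet_Ici).mul_const (f z)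
  refine (hψ.norm.div_const k).congr (ae_of_all _ fun z => ?_)
  simp only [primitiveKernel, norm_mul, norm_indicator_eq_indicator_norm, Real.norm_eq_abs,
    abs_exp]
  rw [integral_mul_const, integral_Ioi_indicator_Ici_exp hk, div_mul_eq_mul_div]

theorem integrableOn_exp_mul_primitive (hk : 0 < k) (ha : a ≤ 0)
    (hf : IntegrableOn f (Ioc 0 (-a)))
    (hfk : IntegrableOn (fun z => exp (-k * z) * f z) (Ioi (-a))) :
    IntegrableOn (fun y => exp (-k * y) * ∫ z in 0..(y - a), f z) (Ioi 0) :=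
  IntegrableOn.congr_fun (integrable_primitiveKernel hk ha hf hfk).integral_prod_left
    (fun _ hy => integral_primitiveKernel_snd ha hy) measurableSet_Ioi

theorem integral_Ioi_exp_mul_primitive (hk : 0 < k) (ha : a ≤ 0)
    (hf : IntegrableOn f (Ioc 0 (-a)))
    (hfk : IntegrableOn (fun z => exp (-k * z) * f z) (Ioi (-a))) :
    ∫ y in Ioi 0, exp (-k * y) * ∫ z in 0..(y - a), f z
      = ((∫ z in 0..(-a), f z) + exp (-k * a) * ∫ z in Ioi (-a), exp (-k * z) * f z) / k := by
  calc ∫ y in Ioi 0, exp (-k * y) * ∫ z in 0..(y - a), f z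
      = ∫ y in Ioi 0, ∫ z in Ioi 0, primitiveKernel f k a (y, z) :=
        setIntegral_congr_fun measurableSet_Ioi fun y hy =>
          (integral_primitiveKernel_snd ha hy).symm
    _ = ∫ z in Ioi 0, ∫ y in Ioi 0, primitiveKernel f k a (y, z) :=
        integral_integral_swap (integrable_primitiveKernel hk ha hf hfk)
    _ = _ := by
        simp_rw [integral_primitiveKernel_fst hk]
        rw [integral_div, integral_exp_max_mul ha hf hfk]

end PrimitiveLaplace

/-- `Z^{(q)}(x, θ)` of the paper, with `α = q - ψ(θ)` (so `α = -r` at `θ = Φ(q + r)`). -/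
noncomputable def scaleZ (W : ℝ → ℝ) (α θ x : ℝ) : ℝ :=
  exp (θ * x) * (1 + α * ∫ z in 0..x, exp (-θ * z) * W z)

section ScaleFunction

variable {W : ℝ → ℝ} {c Φ : ℝ}

theorem locallyIntegrable_exp_mul (hWnn : ∀ x, 0 ≤ W x) (hWm : Measurable W)
    (hW0 : ∀ x < 0, W x = 0) (hWbound : ∀ z ≥ (0:ℝ), W z ≤ c * exp (Φ * z)) (β : ℝ) :
    LocallyIntegrable (fun z => exp (β * z) * W z) := by
  have hdom : Continuous fun z => c * exp ((β + Φ) * z) := by fun_prop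
  refine hdom.locallyIntegrable.mono (by fun_prop) (ae_of_all _ fun z => ?_)
  rw [Real.norm_of_nonneg (mul_nonneg (exp_pos _).le (hWnn z))]
  rcases lt_or_ge z 0 with hz | hz
  · rw [hW0 z hz, mul_zero]; exact norm_nonneg _
  · calc exp (β * z) * W z ≤ exp (β * z) * (c * exp (Φ * z)) :=
          mul_le_mul_of_nonneg_left (hWbound z hz) (exp_pos _).le
      _ = c * exp ((β + Φ) * z) := by rw [mul_left_comm, ← exp_add, add_mul]
      _ ≤ ‖c * exp ((β + Φ) * z)‖ := le_norm_self _

theorem integrableOn_Ioi_exp_neg_mul {Φ' : ℝ} (hWnn : ∀ x, 0 ≤ W x) (hWm : Measurable W)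
    (hWbound : ∀ z ≥ (0:ℝ), W z ≤ c * exp (Φ * z)) (hΦ : Φ < Φ') :
    IntegrableOn (fun z => exp (-Φ' * z) * W z) (Ioi 0) := by
  refine ((exp_neg_integrableOn_Ioi 0 (sub_pos.2 hΦ)).const_mul c).mono' (by fun_prop) ?_
  filter_upwards [ae_restrict_mem measurableSet_Ioi] with z hz
  rw [Real.norm_of_nonneg (mul_nonneg (exp_pos _).le (hWnn z))]
  calc exp (-Φ' * z) * W z ≤ exp (-Φ' * z) * (c * exp (Φ * z)) :=
        mul_le_mul_of_nonneg_left (hWbound z (le_of_lt hz)) (exp_pos _).le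
    _ = c * exp (-(Φ' - Φ) * z) := by rw [mul_left_comm, ← exp_add]; ring_nf

theorem integral_exp_neg_mul_le {θ x : ℝ} (hc : 0 ≤ c)
    (hWbound : ∀ z ≥ (0:ℝ), W z ≤ c * exp (Φ * z))
    (hloc : LocallyIntegrable (fun z => exp (-θ * z) * W z)) (hθΦ : θ < Φ) (hx : 0 ≤ x) :
    ∫ z in 0..x, exp (-θ * z) * W z ≤ c / (Φ - θ) * exp ((Φ - θ) * x) := by
  have hΦθ : 0 < Φ - θ := sub_pos.2 hθΦ
  have hexp : IntegrableOn (fun z => c * exp ((Φ - θ) * z)) (Iic x) :=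
    (integrableOn_exp_mul_Iic hΦθ x).const_mul c
  calc ∫ z in 0..x, exp (-θ * z) * W z
      ≤ ∫ z in Ioc 0 x, c * exp ((Φ - θ) * z) := by
        rw [intervalIntegral.integral_of_le hx]
        refine setIntegral_mono_on ?_ (hexp.mono_set fun z hz => hz.2) measurableSet_Ioc
          fun z hz => ?_
        · exact (hloc.integrableOn_isCompact isCompact_Icc).mono_set Ioc_subset_Icc_self
        · calc exp (-θ * z) * W z ≤ exp (-θ * z) * (c * exp (Φ * z)) :=
                mul_le_mul_of_nonneg_left (hWbound z hz.1.le) (exp_pos _).le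
            _ = c * exp ((Φ - θ) * z) := by rw [mul_left_comm, ← exp_add]; ring_nf
    _ ≤ ∫ z in Iic x, c * exp ((Φ - θ) * z) :=
        setIntegral_mono_set hexp (ae_of_all _ fun z => by positivity)
          (Ioc_subset_Iic_self.eventuallyLE)
    _ = c / (Φ - θ) * exp ((Φ - θ) * x) := by
        rw [integral_const_mul, integral_exp_mul_Iic hΦθ]; ring

theorem continuous_scaleZ {α θ : ℝ} (hloc : LocallyIntegrable (fun z => exp (-θ * z) * W z)) :
    Continuous (scaleZ W α θ) := by
  have hprim := intervalIntegral.continuous_primitive (fun s t => intervalIntegrable_iff.2 <|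
    (hloc.integrableOn_isCompact isCompact_uIcc).mono_set uIoc_subset_uIcc) 0
  unfold scaleZ
  fun_prop

theorem abs_scaleZ_le {α θ x : ℝ} (hc : 0 ≤ c) (hWnn : ∀ x, 0 ≤ W x)
    (hWbound : ∀ z ≥ (0:ℝ), W z ≤ c * exp (Φ * z))
    (hloc : LocallyIntegrable (fun z => exp (-θ * z) * W z)) (hθΦ : θ < Φ) (hx : 0 ≤ x) :
    |scaleZ W α θ x| ≤ (1 + |α| * (c / (Φ - θ))) * exp (Φ * x) := by
  set F := ∫ z in 0..x, exp (-θ * z) * W z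
  have hF0 : 0 ≤ F := intervalIntegral.integral_nonneg hx fun z _ =>
    mul_nonneg (exp_pos _).le (hWnn z)
  have hF := integral_exp_neg_mul_le hc hWbound hloc hθΦ hx
  have hθF : exp (θ * x) * F ≤ c / (Φ - θ) * exp (Φ * x) :=
    calc exp (θ * x) * F ≤ exp (θ * x) * (c / (Φ - θ) * exp ((Φ - θ) * x)) :=
          mul_le_mul_of_nonneg_left hF (exp_pos _).le
      _ = c / (Φ - θ) * exp (Φ * x) := by rw [mul_left_comm, ← exp_add]; ring_nf
  have hθ : exp (θ * x) ≤ exp (Φ * x) := exp_le_exp.2 (mul_le_mul_of_nonneg_right hθΦ.le hx)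
  calc |scaleZ W α θ x| ≤ exp (θ * x) * (1 + |α| * F) := by
        rw [scaleZ, abs_mul, abs_exp]
        refine mul_le_mul_of_nonneg_left ((abs_add_le _ _).trans ?_) (exp_pos _).le
        rw [abs_one, abs_mul, abs_of_nonneg hF0]
    _ = exp (θ * x) + |α| * (exp (θ * x) * F) := by ring
    _ ≤ exp (Φ * x) + |α| * (c / (Φ - θ) * exp (Φ * x)) := by gcongr
    _ = (1 + |α| * (c / (Φ - θ))) * exp (Φ * x) := by ring

theorem integral_Ioi_exp_mul_scaleZ {α θ Φ' r a : ℝ} (hr : r ≠ 0) (hθΦ' : θ < Φ')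
    (ha : a ≤ 0) (hf : IntegrableOn (fun z => exp (-θ * z) * W z) (Ioc 0 (-a)))
    (hW : IntegrableOn (fun z => exp (-Φ' * z) * W z) (Ioi 0))
    (hWlap : ∫ z in Ioi 0, exp (-Φ' * z) * W z = 1 / r) :
    r * ∫ y in Ioi 0, exp (-Φ' * y) * scaleZ W α θ (y - a)
      = (r * scaleZ W α θ (-a) + α * scaleZ W (-r) Φ' (-a)) / (Φ' - θ) := by
  have hk : 0 < Φ' - θ := sub_pos.2 hθΦ'
  have htilt : (fun z => exp (-(Φ' - θ) * z) * (exp (-θ * z) * W z))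
      = fun z => exp (-Φ' * z) * W z := funext fun z => by
    rw [← mul_assoc, ← exp_add]; ring_nf
  have hfk : IntegrableOn (fun z => exp (-(Φ' - θ) * z) * (exp (-θ * z) * W z)) (Ioi (-a)) :=
    htilt ▸ hW.mono_set (Ioi_subset_Ioi (neg_nonneg.2 ha))
  have htail : ∫ z in Ioi (-a), exp (-Φ' * z) * W z
      = 1 / r - ∫ z in 0..(-a), exp (-Φ' * z) * W z := by
    rw [← hWlap, ← intervalIntegral.integral_interval_add_Ioi hW
      (hW.mono_set (Ioi_subset_Ioi (neg_nonneg.2 ha)))]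
    ring
  have hpt : ∀ y, exp (-Φ' * y) * scaleZ W α θ (y - a) = exp (θ * -a) * (exp (-(Φ' - θ) * y)
      + α * (exp (-(Φ' - θ) * y) * ∫ z in 0..(y - a), exp (-θ * z) * W z)) :=
    fun y => by
      have hexp : exp (-Φ' * y) * exp (θ * (y - a)) = exp (θ * -a) * exp (-(Φ' - θ) * y) := by
        rw [← exp_add, ← exp_add]; ring_nf
      rw [scaleZ, ← mul_assoc, hexp]
      ring
  simp_rw [hpt]
  rw [integral_const_mul, integral_add (exp_neg_integrableOn_Ioi 0 hk)
    ((integrableOn_exp_mul_primitive hk ha hf hfk).const_mul α), integral_const_mul,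
    integral_Ioi_exp_mul_primitive hk ha hf hfk, htilt, htail, integral_exp_mul_Ioi (by linarith)]
  have hexp : exp (Φ' * -a) = exp (θ * -a) * exp (-(Φ' - θ) * a) := by rw [← exp_add]; ring_nf
  simp only [scaleZ, hexp, mul_zero, exp_zero]
  field_simp
  ring

end ScaleFunction

theorem tendsto_add_convolution_div {V Z : ℝ → ℝ} {Φ Φ' c' C r a : ℝ} (hΦ : Φ < Φ')
    (ha : a ≤ 0) (hc' : c' ≠ 0) (hVnn : ∀ x, 0 ≤ V x)
    (hVmono : MonotoneOn (fun x => exp (-Φ' * x) * V x) (Ioi 0))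
    (hVlim : Tendsto (fun x => exp (-Φ' * x) * V x) atTop (𝓝 c'))
    (hZc : Continuous Z) (hZ : ∀ x ≥ (0:ℝ), |Z x| ≤ C * exp (Φ * x)) :
    Tendsto (fun b => (Z (b - a) + r * ∫ y in 0..b, V (b - y) * Z (y - a)) / V b)
      atTop (𝓝 (r * ∫ y in Ioi 0, exp (-Φ' * y) * Z (y - a))) := by
  set g := fun x => exp (-Φ' * x) * V x
  set u := fun y => exp (-Φ' * y) * Z (y - a)
  have hV : ∀ x, V x = exp (Φ' * x) * g x := fun x => by
    rw [← mul_assoc, ← exp_add]; ring_nf; rw [exp_zero, one_mul]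
  have hg : ∀ x > 0, |g x| ≤ c' := fun x hx => by
    rw [abs_of_nonneg (mul_nonneg (exp_pos _).le (hVnn x))]
    exact ge_of_tendsto hVlim (eventually_ge_atTop x |>.mono fun b hb =>
      hVmono hx (hx.trans_le hb) hb)
  have hgm : AEStronglyMeasurable g (volume.restrict (Ioi 0)) :=
    (aemeasurable_restrict_of_monotoneOn measurableSet_Ioi hVmono).aestronglyMeasurable
  have hu_le : ∀ y ≥ (0:ℝ), ‖u y‖ ≤ C * exp (Φ * -a) * exp (-(Φ' - Φ) * y) := fun y hy => by
    have hexp : exp (-Φ' * y) * exp (Φ * (y - a))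
        = exp (Φ * -a) * exp (-(Φ' - Φ) * y) := by
      rw [← exp_add, ← exp_add]; ring_nf
    calc ‖u y‖ = exp (-Φ' * y) * |Z (y - a)| := by
          rw [Real.norm_eq_abs, abs_mul, abs_exp]
      _ ≤ exp (-Φ' * y) * (C * exp (Φ * (y - a))) :=
          mul_le_mul_of_nonneg_left (hZ _ (by linarith)) (exp_pos _).le
      _ = C * exp (Φ * -a) * exp (-(Φ' - Φ) * y) := by rw [mul_left_comm, hexp, mul_assoc]
  have hu : IntegrableOn u (Ioi 0) :=
    ((exp_neg_integrableOn_Ioi 0 (sub_pos.2 hΦ)).const_mul _).mono' (by fun_prop)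
      ((ae_restrict_mem measurableSet_Ioi).mono fun y hy => hu_le y (le_of_lt hy))
  have hdecay : Tendsto u atTop (𝓝 0) := by
    have hexp : Tendsto (fun y => exp (-(Φ' - Φ) * y)) atTop (𝓝 0) :=
      tendsto_exp_atBot.comp (tendsto_id.const_mul_atTop_of_neg (by linarith))
    refine squeeze_zero_norm' ((eventually_ge_atTop 0).mono hu_le) ?_
    simpa using hexp.const_mul (C * exp (Φ * -a))
  have hconv := tendsto_intervalIntegral_comp_sub_mul hgm hg hVlim hu
  have hlim := (hdecay.add (hconv.const_mul r)).div hVlim hc'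
  rw [zero_add, mul_left_comm, mul_div_cancel_left₀ _ hc'] at hlim
  refine hlim.congr fun b => ?_
  have hconvV : ∫ y in 0..b, V (b - y) * Z (y - a)
      = exp (Φ' * b) * ∫ y in 0..b, g (b - y) * u y := by
    rw [← intervalIntegral.integral_const_mul]
    refine intervalIntegral.integral_congr fun y _ => ?_
    have hexp : exp (Φ' * b) * exp (-Φ' * (b - y)) * exp (-Φ' * y) = 1 := by
      rw [← exp_add, ← exp_add]; ring_nf; exact exp_zero
    simp only [g, u]
    linear_combination -(V (b - y) * Z (y - a)) * hexp
  have hZb : Z (b - a) = exp (Φ' * b) * u b := by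
    simp only [u]; rw [← mul_assoc, ← exp_add]; ring_nf; rw [exp_zero, one_mul]
  rw [Pi.div_apply, hconvV, hZb, hV b, mul_left_comm r, ← mul_add,
    mul_div_mul_left _ _ (exp_pos _).ne']

theorem stmt_4_general (q r θ Φ Φ' p c c' a : ℝ) (hr : 0 < r)
    (hθΦ : θ < Φ) (hΦΦ' : Φ < Φ')
    (hc : 0 < c) (hc' : 0 < c') (ha : a < 0)
    (W V : ℝ → ℝ) (hWnn : ∀ x, 0 ≤ W x) (hWm : Measurable W)
    (hW0 : ∀ x < 0, W x = 0)
    (hWbound : ∀ z ≥ (0:ℝ), W z ≤ c * Real.exp (Φ * z))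
    (hWlap : (∫ z in Set.Ioi (0:ℝ), Real.exp (-Φ' * z) * W z) = 1 / r)
    (hVnn : ∀ x, 0 ≤ V x)
    (hVmono : MonotoneOn (fun x => Real.exp (-Φ' * x) * V x) (Set.Ioi 0))
    (hVlim : Tendsto (fun x => Real.exp (-Φ' * x) * V x) atTop (nhds c'))
    (Zθ ZΦ' : ℝ → ℝ)
    (hZθ : ∀ x, Zθ x
      = Real.exp (θ * x) * (1 + (q - p) * ∫ z in (0:ℝ)..x, Real.exp (-θ * z) * W z))
    (hZΦ' : ∀ x, ZΦ' x
      = Real.exp (Φ' * x) * (1 - r * ∫ z in (0:ℝ)..x, Real.exp (-Φ' * z) * W z)) :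
    Tendsto (fun b => (Zθ (b - a) + r * ∫ y in (0:ℝ)..b, V (b - y) * Zθ (y - a)) / V b)
      atTop (nhds ((r * Zθ (-a) + (q - p) * ZΦ' (-a)) / (Φ' - θ))) := by
  have hloc := locallyIntegrable_exp_mul hWnn hWm hW0 hWbound
  obtain rfl : Zθ = scaleZ W (q - p) θ := funext hZθ
  obtain rfl : ZΦ' = scaleZ W (-r) Φ' := funext fun x => by rw [hZΦ', scaleZ]; ring
  rw [← integral_Ioi_exp_mul_scaleZ hr.ne' (hθΦ.trans hΦΦ') ha.le
    (((hloc _).integrableOn_isCompact isCompact_Icc).mono_set Ioc_subset_Icc_self)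
    (integrableOn_Ioi_exp_neg_mul hWnn hWm hWbound hΦΦ') hWlap]
  exact tendsto_add_convolution_div hΦΦ' ha.le hc'.ne' hVnn hVmono hVlim
    (continuous_scaleZ (hloc _)) fun x hx => abs_scaleZ_le hc.le hWnn hWbound (hloc _) hθΦ hx

/-- Lemma B.1(iii), convergence of `Z_a^{(q,r)}(b,θ)/W^{(q+r)}(b)` as `b → ∞`. -/
theorem stmt_4 (q r θ Φ Φ' p c c' a : ℝ) (hq : 0 ≤ q) (hr : 0 < r)
    (hθ : 0 ≤ θ) (hθΦ : θ < Φ) (hΦΦ' : Φ < Φ') (hp : p ≤ q)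
    (hc : 0 < c) (hc' : 0 < c') (ha : a < 0)
    (W V : ℝ → ℝ) (hWnn : ∀ x, 0 ≤ W x) (hWm : Measurable W)
    (hW0 : ∀ x < 0, W x = 0)
    (hWbound : ∀ z ≥ (0:ℝ), W z ≤ c * Real.exp (Φ * z))
    (hWlap : (∫ z in Set.Ioi (0:ℝ), Real.exp (-Φ' * z) * W z) = 1 / r)
    (hVnn : ∀ x, 0 ≤ V x) (hV0 : ∀ x < 0, V x = 0)
    (hVmono : MonotoneOn (fun x => Real.exp (-Φ' * x) * V x) (Set.Ioi 0))
    (hVlim : Tendsto (fun x => Real.exp (-Φ' * x) * V x) atTop (nhds c'))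
    (Zθ ZΦ' : ℝ → ℝ)
    (hZθ : ∀ x, Zθ x
      = Real.exp (θ * x) * (1 + (q - p) * ∫ z in (0:ℝ)..x, Real.exp (-θ * z) * W z))
    (hZΦ' : ∀ x, ZΦ' x
      = Real.exp (Φ' * x) * (1 - r * ∫ z in (0:ℝ)..x, Real.exp (-Φ' * z) * W z)) :
    Tendsto (fun b => (Zθ (b - a) + r * ∫ y in (0:ℝ)..b, V (b - y) * Zθ (y - a)) / V b)
      atTop (nhds ((r * Zθ (-a) + (q - p) * ZΦ' (-a)) / (Φ' - θ))) :=
  stmt_4_general q r θ Φ Φ' p c c' a hr hθΦ hΦΦ' hc hc' ha W V hWnn hWm hW0 hWbound hWlap hVnn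
    hVmono hVlim Zθ ZΦ' hZθ hZΦ'
end

section
/- Let r > 0, Φ ≥ 0, c ∈ (0,∞), and x > 0 be reals. Let W : ℝ → ℝ be nonnegative, nondecreasing on [0,∞), vanish on (−∞,0), be differentiable on (0,∞) with W′(y)/W(y) → Φ as y → ∞, and with y ↦ e^{−Φy}·W(y) nondecreasing on (0,∞) converging to c. Let V : ℝ → ℝ vanish on (−∞,0) and be continuously differentiable on [0,∞) (one-sided derivative at 0). Then lim_{a→−∞} { [W′(x−a) + r·V(0)·W(x−a) + r·∫₀ˣ V′(x−y)·W(y−a) dy]/W(−a) − r·V(x) } = Φ·e^{Φx}·(1 + r·∫₀ˣ e^{−Φz}·V(z) dz). -/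
open MeasureTheory Filter Set

/-- Lemma B.2(ii), convergence of `(I_a^{(q,r)})′(x)` as `a → -∞`. -/
theorem stmt_9 (r Φ c x : ℝ) (hr : 0 < r) (hΦ : 0 ≤ Φ) (hc : 0 < c) (hx : 0 < x)
    (W V V' : ℝ → ℝ)
    (hWnn : ∀ y, 0 ≤ W y) (hWmono : MonotoneOn W (Set.Ici 0))
    (hW0 : ∀ y < 0, W y = 0)
    (hWdiff : ∀ y > (0:ℝ), DifferentiableAt ℝ W y)
    (hWratio : Tendsto (fun y => deriv W y / W y) atTop (nhds Φ))
    (hWexp : MonotoneOn (fun y => Real.exp (-Φ * y) * W y) (Set.Ioi 0))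
    (hWlim : Tendsto (fun y => Real.exp (-Φ * y) * W y) atTop (nhds c))
    (hV0 : ∀ y < 0, V y = 0)
    (hV' : ∀ y ∈ Set.Ici (0:ℝ), HasDerivWithinAt V (V' y) (Set.Ici 0) y)
    (hV'cont : ContinuousOn V' (Set.Ici 0)) :
    Tendsto (fun a => (deriv W (x - a) + r * V 0 * W (x - a)
        + r * ∫ y in (0:ℝ)..x, V' (x - y) * W (y - a)) / W (-a) - r * V x)
      atBot
      (nhds (Φ * Real.exp (Φ * x) *
        (1 + r * ∫ z in (0:ℝ)..x, Real.exp (-Φ * z) * V z))) := by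
  -- W is monotone on all of ℝ
  have hWMono : Monotone W := by
    intro s t hst
    rcases lt_or_ge t 0 with ht | ht
    · rw [hW0 s (lt_of_le_of_lt hst ht), hW0 t ht]
    · rcases lt_or_ge s 0 with hs | hs
      · rw [hW0 s hs]; exact hWnn t
      · exact hWmono hs ht hst
  -- auxiliary tendsto facts
  have hsub : ∀ t : ℝ, Tendsto (fun a : ℝ => t - a) atBot atTop := by
    intro t
    have h := tendsto_atTop_add_const_left atBot t tendsto_neg_atBot_atTop
    simpa [sub_eq_add_neg] using h
  have hEcomp : ∀ t : ℝ, Tendsto (fun a : ℝ => Real.exp (-Φ * (t - a)) * W (t - a))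
      atBot (nhds c) := fun t => hWlim.comp (hsub t)
  -- the fundamental ratio convergence
  have hratio : ∀ t : ℝ, Tendsto (fun a => W (t - a) / W (-a)) atBot
      (nhds (Real.exp (Φ * t))) := by
    intro t
    have h2 : Tendsto (fun a : ℝ =>
        (Real.exp (-Φ * (t - a)) * W (t - a)) / (Real.exp (-Φ * (0 - a)) * W (0 - a))
          * Real.exp (Φ * t)) atBot (nhds (c / c * Real.exp (Φ * t))) :=
      ((hEcomp t).div (hEcomp 0) hc.ne').mul_const _
    rw [div_self hc.ne', one_mul] at h2
    refine h2.congr fun a => ?_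
    have e1 : Real.exp (-Φ * (t - a)) * Real.exp (Φ * t) = Real.exp (-Φ * (0 - a)) := by
      rw [← Real.exp_add]; ring_nf
    have e2 : (Real.exp (-Φ * (t - a)) * W (t - a)) / (Real.exp (-Φ * (0 - a)) * W (0 - a))
        * Real.exp (Φ * t)
        = (Real.exp (-Φ * (t - a)) * Real.exp (Φ * t) / Real.exp (-Φ * (0 - a)))
          * (W (t - a) / W (0 - a)) := by ring
    rw [e2, e1, div_self (Real.exp_ne_zero _), one_mul, zero_sub]
  -- eventually positivity of W at t - a
  have hpos : ∀ t : ℝ, ∀ᶠ a in atBot, 0 < W (t - a) := by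
    intro t
    have h2 : ∀ᶠ a in atBot, c / 2 < Real.exp (-Φ * (t - a)) * W (t - a) :=
      (hEcomp t).eventually (eventually_gt_nhds (by linarith))
    filter_upwards [h2] with a ha
    nlinarith [Real.exp_pos (-Φ * (t - a)), hWnn (t - a)]
  -- the exponential scaling of W is bounded by c on (0, ∞)
  have hEle : ∀ s : ℝ, 0 < s → Real.exp (-Φ * s) * W s ≤ c := by
    intro s hs
    refine ge_of_tendsto hWlim ?_
    filter_upwards [eventually_ge_atTop s] with u hu
    simpa using hWexp hs (lt_of_lt_of_le hs hu) hu
  -- uniform bound for the ratio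
  have hbnd : ∀ᶠ a in atBot, ∀ y ∈ Set.Icc (0:ℝ) x,
      W (y - a) / W (-a) ≤ 2 * Real.exp (Φ * x) := by
    have h2 : ∀ᶠ a in atBot, c / 2 < Real.exp (-Φ * (0 - a)) * W (0 - a) :=
      (hEcomp 0).eventually (eventually_gt_nhds (by linarith))
    filter_upwards [h2, eventually_le_atBot (-1 : ℝ)] with a hEa ha
    intro y hy
    rw [zero_sub] at hEa
    have hma : (0:ℝ) < -a := by linarith
    have hWa : 0 < W (-a) := by
      nlinarith [Real.exp_pos (-Φ * -a), hWnn (-a)]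
    have h1 : Real.exp (-Φ * (y - a)) * W (y - a) ≤ c := hEle _ (by linarith [hy.1])
    have e2 : W (y - a) ≤ c * Real.exp (Φ * (y - a)) := by
      have hh := mul_le_mul_of_nonneg_left h1 (Real.exp_pos (Φ * (y - a))).le
      calc W (y - a)
          = Real.exp (Φ * (y - a)) * (Real.exp (-Φ * (y - a)) * W (y - a)) := by
            rw [← mul_assoc, ← Real.exp_add,
              show Φ * (y - a) + -Φ * (y - a) = 0 by ring, Real.exp_zero, one_mul]
        _ ≤ Real.exp (Φ * (y - a)) * c := hh
        _ = c * Real.exp (Φ * (y - a)) := mul_comm _ _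
    have e3 : c / 2 * Real.exp (-(Φ * a)) ≤ W (-a) := by
      have h' : c / 2 ≤ Real.exp (Φ * a) * W (-a) := by
        rw [show Φ * a = -Φ * -a by ring]; exact hEa.le
      have := mul_le_mul_of_nonneg_left h' (Real.exp_pos (-(Φ * a))).le
      calc c / 2 * Real.exp (-(Φ * a)) = Real.exp (-(Φ * a)) * (c / 2) := mul_comm _ _
        _ ≤ Real.exp (-(Φ * a)) * (Real.exp (Φ * a) * W (-a)) := this
        _ = W (-a) := by
            rw [← mul_assoc, ← Real.exp_add, show -(Φ * a) + Φ * a = 0 by ring,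
              Real.exp_zero, one_mul]
    rw [div_le_iff₀ hWa]
    have e4 : c * Real.exp (Φ * (y - a)) ≤ 2 * Real.exp (Φ * x) * W (-a) := by
      have e5 : Real.exp (Φ * (y - a)) ≤ Real.exp (Φ * (x - a)) :=
        Real.exp_le_exp.mpr (by nlinarith [hy.2])
      have e6 : Real.exp (Φ * x) * Real.exp (-(Φ * a)) = Real.exp (Φ * (x - a)) := by
        rw [← Real.exp_add]; ring_nf
      calc c * Real.exp (Φ * (y - a)) ≤ c * Real.exp (Φ * (x - a)) :=
            mul_le_mul_of_nonneg_left e5 hc.le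
        _ = 2 * Real.exp (Φ * x) * (c / 2 * Real.exp (-(Φ * a))) := by
            rw [show 2 * Real.exp (Φ * x) * (c / 2 * Real.exp (-(Φ * a)))
              = c * (Real.exp (Φ * x) * Real.exp (-(Φ * a))) by ring, e6]
        _ ≤ 2 * Real.exp (Φ * x) * W (-a) :=
            mul_le_mul_of_nonneg_left e3 (by positivity)
    exact e2.trans e4
  -- the derivative term
  have hD : Tendsto (fun a => deriv W (x - a) / W (-a)) atBot
      (nhds (Φ * Real.exp (Φ * x))) := by
    have h1 : Tendsto (fun a : ℝ => deriv W (x - a) / W (x - a)) atBot (nhds Φ) :=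
      hWratio.comp (hsub x)
    have h2 := h1.mul (hratio x)
    refine h2.congr' ?_
    filter_upwards [hpos x] with a ha
    have e : deriv W (x - a) / W (x - a) * (W (x - a) / W (-a))
        = deriv W (x - a) / W (-a) * (W (x - a) / W (x - a)) := by ring
    rw [e, div_self ha.ne', mul_one]
  -- dominated convergence for the integral term
  have hDCT : Tendsto (fun a => ∫ y in (0:ℝ)..x, V' (x - y) * (W (y - a) / W (-a)))
      atBot (nhds (∫ y in (0:ℝ)..x, V' (x - y) * Real.exp (Φ * y))) := by
    have hcont1 : ContinuousOn (fun y : ℝ => V' (x - y)) (Set.Icc 0 x) := by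
      apply hV'cont.comp (continuous_const.sub continuous_id).continuousOn
      intro y hy
      simp only [mem_Ici]
      exact sub_nonneg.mpr hy.2
    obtain ⟨M, hM⟩ := (isCompact_Icc (a := (0:ℝ)) (b := x)).exists_bound_of_continuousOn hcont1
    have hM0 : 0 ≤ M := le_trans (norm_nonneg _) (hM 0 ⟨le_refl _, hx.le⟩)
    have hsubset : Set.uIoc (0:ℝ) x ⊆ Set.Icc 0 x := by
      rw [Set.uIoc_of_le hx.le]; exact Set.Ioc_subset_Icc_self
    apply intervalIntegral.tendsto_integral_filter_of_dominated_convergence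
      (bound := fun _ => M * (2 * Real.exp (Φ * x)))
    · refine Filter.Eventually.of_forall fun a => ?_
      have m1 : AEStronglyMeasurable (fun y : ℝ => V' (x - y))
          (volume.restrict (Set.uIoc (0:ℝ) x)) :=
        (hcont1.mono hsubset).aestronglyMeasurable measurableSet_uIoc
      have m2 : AEStronglyMeasurable (fun y : ℝ => W (y - a) / W (-a))
          (volume.restrict (Set.uIoc (0:ℝ) x)) :=
        ((hWMono.measurable.comp (measurable_id.sub_const a)).div_const _).aestronglyMeasurable
      exact m1.mul m2
    · filter_upwards [hbnd] with a ha
      refine Filter.Eventually.of_forall fun y hy => ?_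
      have hy' : y ∈ Set.Icc (0:ℝ) x := hsubset hy
      have hrat : W (y - a) / W (-a) ≤ 2 * Real.exp (Φ * x) := ha y hy'
      have hratnn : 0 ≤ W (y - a) / W (-a) := div_nonneg (hWnn _) (hWnn _)
      rw [norm_mul, Real.norm_eq_abs (W (y - a) / W (-a)), abs_of_nonneg hratnn]
      exact mul_le_mul (hM y hy') hrat hratnn hM0
    · exact intervalIntegrable_const
    · refine Filter.Eventually.of_forall fun y _ => ?_
      exact (hratio y).const_mul _
  -- assemble
  have hfinal : Tendsto (fun a => deriv W (x - a) / W (-a)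
        + r * V 0 * (W (x - a) / W (-a))
        + r * (∫ y in (0:ℝ)..x, V' (x - y) * (W (y - a) / W (-a))) - r * V x)
      atBot (nhds (Φ * Real.exp (Φ * x) + r * V 0 * Real.exp (Φ * x)
        + r * (∫ y in (0:ℝ)..x, V' (x - y) * Real.exp (Φ * y)) - r * V x)) :=
    ((hD.add ((hratio x).const_mul (r * V 0))).add (hDCT.const_mul r)).sub_const (r * V x)
  have heq : ∀ a : ℝ, deriv W (x - a) / W (-a)
        + r * V 0 * (W (x - a) / W (-a))
        + r * (∫ y in (0:ℝ)..x, V' (x - y) * (W (y - a) / W (-a))) - r * V x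
      = (deriv W (x - a) + r * V 0 * W (x - a)
        + r * ∫ y in (0:ℝ)..x, V' (x - y) * W (y - a)) / W (-a) - r * V x := by
    intro a
    have hint : (∫ y in (0:ℝ)..x, V' (x - y) * W (y - a)) / W (-a)
        = ∫ y in (0:ℝ)..x, V' (x - y) * (W (y - a) / W (-a)) := by
      rw [← intervalIntegral.integral_div]
      exact intervalIntegral.integral_congr fun y _ => mul_div_assoc _ _ _
    rw [add_div, add_div, mul_div_assoc (r * V 0), mul_div_assoc r, hint]
  have hfinal2 : Tendsto (fun a => (deriv W (x - a) + r * V 0 * W (x - a)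
        + r * ∫ y in (0:ℝ)..x, V' (x - y) * W (y - a)) / W (-a) - r * V x)
      atBot (nhds (Φ * Real.exp (Φ * x) + r * V 0 * Real.exp (Φ * x)
        + r * (∫ y in (0:ℝ)..x, V' (x - y) * Real.exp (Φ * y)) - r * V x)) :=
    hfinal.congr heq
  -- identify the limit
  have hVcont : ContinuousOn V (Set.Icc 0 x) := fun y hy =>
    ((hV' y hy.1).continuousWithinAt).mono (Set.Icc_subset_Ici_self)
  have hexpcont : Continuous (fun z : ℝ => Real.exp (-Φ * z)) :=
    Real.continuous_exp.comp (continuous_const.mul continuous_id)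
  -- substitution in the integral
  have hsubst : (∫ y in (0:ℝ)..x, V' (x - y) * Real.exp (Φ * y))
      = Real.exp (Φ * x) * ∫ z in (0:ℝ)..x, V' z * Real.exp (-Φ * z) := by
    have c1 : (∫ y in (0:ℝ)..x, V' (x - y) * Real.exp (Φ * y))
        = ∫ y in (0:ℝ)..x, (fun z => V' z * Real.exp (Φ * (x - z))) (x - y) := by
      apply intervalIntegral.integral_congr
      intro y _
      simp only
      rw [show x - (x - y) = y by ring]
    have c2 := intervalIntegral.integral_comp_sub_left (a := (0:ℝ)) (b := x)
      (fun z => V' z * Real.exp (Φ * (x - z))) x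
    rw [c1, c2, sub_self, sub_zero]
    rw [← intervalIntegral.integral_const_mul]
    apply intervalIntegral.integral_congr
    intro z _
    simp only
    rw [show Real.exp (Φ * x) * (V' z * Real.exp (-Φ * z))
      = V' z * (Real.exp (Φ * x) * Real.exp (-Φ * z)) by ring, ← Real.exp_add,
      show Φ * x + -Φ * z = Φ * (x - z) by ring]
  -- FTC / integration by parts
  have hcontG : ContinuousOn (fun z : ℝ => V z * Real.exp (-Φ * z)) (Set.Icc 0 x) :=
    hVcont.mul hexpcont.continuousOn
  have hG : ∀ z ∈ Set.Ioo (0:ℝ) x,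
      HasDerivWithinAt (fun z : ℝ => V z * Real.exp (-Φ * z))
        (V' z * Real.exp (-Φ * z) + V z * (Real.exp (-Φ * z) * -Φ)) (Set.Ioi z) z := by
    intro z hz
    have hVz : HasDerivAt V (V' z) z :=
      (hV' z hz.1.le).hasDerivAt (Ici_mem_nhds hz.1)
    have hexpz : HasDerivAt (fun z : ℝ => Real.exp (-Φ * z)) (Real.exp (-Φ * z) * -Φ) z := by
      have h1 : HasDerivAt (fun z : ℝ => -Φ * z) (-Φ) z := by
        simpa using (hasDerivAt_id z).const_mul (-Φ)
      simpa using h1.exp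
    exact (hVz.mul hexpz).hasDerivWithinAt
  have hint1 : IntervalIntegrable (fun z : ℝ => V' z * Real.exp (-Φ * z)) volume 0 x := by
    apply ContinuousOn.intervalIntegrable
    rw [Set.uIcc_of_le hx.le]
    exact (hV'cont.mono Set.Icc_subset_Ici_self).mul hexpcont.continuousOn
  have hint2 : IntervalIntegrable (fun z : ℝ => V z * (Real.exp (-Φ * z) * -Φ)) volume 0 x := by
    apply ContinuousOn.intervalIntegrable
    rw [Set.uIcc_of_le hx.le]
    exact hVcont.mul (hexpcont.continuousOn.mul continuousOn_const)
  have hFTC := intervalIntegral.integral_eq_sub_of_hasDeriv_right_of_le hx.le hcontG hG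
    (hint1.add hint2)
  rw [intervalIntegral.integral_add hint1 hint2] at hFTC
  have hB : (∫ z in (0:ℝ)..x, V z * (Real.exp (-Φ * z) * -Φ))
      = -Φ * ∫ z in (0:ℝ)..x, Real.exp (-Φ * z) * V z := by
    rw [← intervalIntegral.integral_const_mul]
    exact intervalIntegral.integral_congr fun z _ => by ring
  rw [hB] at hFTC
  -- hFTC : ∫ V' e + (-Φ) * ∫ e V = V x * exp(-Φ x) - V 0 * exp(-Φ * 0)
  have hkey : Φ * Real.exp (Φ * x) + r * V 0 * Real.exp (Φ * x)
        + r * (∫ y in (0:ℝ)..x, V' (x - y) * Real.exp (Φ * y)) - r * V x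
      = Φ * Real.exp (Φ * x) *
        (1 + r * ∫ z in (0:ℝ)..x, Real.exp (-Φ * z) * V z) := by
    rw [hsubst]
    have hE1 : Real.exp (Φ * x) * Real.exp (-Φ * x) = 1 := by
      rw [← Real.exp_add, show Φ * x + -Φ * x = 0 by ring, Real.exp_zero]
    have hE0 : Real.exp (-Φ * (0:ℝ)) = 1 := by norm_num
    rw [hE0, mul_one] at hFTC
    linear_combination (r * Real.exp (Φ * x)) * hFTC + (r * V x) * hE1
  rw [← hkey]
  exact hfinal2
end

section
/- Let q ≥ 0, r > 0, Φ′ > 0, c′ ∈ (0,∞), and a < 0 be reals. Let W, V : ℝ → ℝ be nonnegative, Borel measurable, locally bounded, vanish on (−∞,0), satisfy the convolution identity V(x) = W(x) + r·∫₀ˣ V(x−y)W(y)dy for all x ≥ 0, and suppose x ↦ e^{−Φ′x}·V(x) is nondecreasing on (0,∞) converging to c′, and W(−a) > 0. Then lim_{b→∞} { [W(b−a) + r·∫₀ᵇ V(b−y)·W(y−a) dy]/W(−a) − r·∫₀ᵇ V(y) dy } / V(b) = Z(−a,Φ′)/W(−a) − r/Φ′ = [Φ′·Z(−a,Φ′)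 − r·W(−a)]/(W(−a)·Φ′), where Z(−a,Φ′) := e^{−Φ′a}·(1 − r·∫₀^{−a} e^{−Φ′u}W(u)du). -/
open MeasureTheory Filter Set Topology

/-!
Tilt by `e^{-Φ'x}`: `v x = e^{-Φ'x} V x` increases to `c'` and `w x = e^{-Φ'x} W x` solves the
renewal equation `v = w + r (v ∗ w)`. As `v ≥ c'/2` eventually, the renewal equation bounds
`∫₀^M w` uniformly, so `w` is integrable; dominated convergence gives `v ∗ w → c' ∫ w`, hence `w`
has a limit, which must be `0`, and `r ∫₀^∞ w = 1`.

After tilting, each ratio in the statement has the form `(∫₀ᵇ v (b - y) g y dy) / v b` with `g`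
integrable, which tends to `∫₀^∞ g` by dominated convergence. For `g y = e^{-Φ'y} W (y - a)` the
limit is `e^{-Φ'a} ∫_{-a}^∞ w = Z(-a, Φ') / r`, and for `g y = e^{-Φ'y}` it is `1 / Φ'`.
-/

lemma Filter.Tendsto.comp_sub_const_atTop {f : ℝ → ℝ} {c : ℝ} (hf : Tendsto f atTop (𝓝 c))
    (y : ℝ) : Tendsto (fun b => f (b - y)) atTop (𝓝 c) :=
  hf.comp <| by simpa [sub_eq_add_neg] using tendsto_atTop_add_const_right atTop (-y) tendsto_id

lemma MonotoneOn.le_of_tendsto_Ioi {f : ℝ → ℝ} {c a : ℝ} (hf : MonotoneOn f (Ioi a))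
    (hc : Tendsto f atTop (𝓝 c)) {x : ℝ} (hx : a < x) : f x ≤ c :=
  ge_of_tendsto hc <| (eventually_ge_atTop x).mono fun _ hy => hf hx (hx.trans_le hy) hy

lemma eq_zero_of_integrableOn_Ioi_of_tendsto {f : ℝ → ℝ} {a L : ℝ}
    (hf : IntegrableOn f (Ioi a)) (hL : Tendsto f atTop (𝓝 L)) : L = 0 := by
  by_contra hL0
  obtain ⟨M, hM⟩ := eventually_atTop.1 <|
    hL.norm.eventually (eventually_gt_nhds (half_lt_self (norm_pos_iff.2 hL0)))
  have hconst : IntegrableOn (fun _ => ‖L‖ / 2) (Ioi (max a M)) :=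
    (hf.mono_set (Ioi_subset_Ioi (le_max_left a M))).norm.mono' aestronglyMeasurable_const <|
      (ae_restrict_mem measurableSet_Ioi).mono fun x hx => by
        simpa [abs_of_nonneg (norm_nonneg L)] using (hM x ((le_max_right a M).trans hx.le)).le
  rcases (integrableOn_const_iff enorm_ne_top).1 hconst with h | h
  · simp [hL0] at h
  · simp at h

lemma intervalIntegrable_of_abs_le_on_Ioo {f : ℝ → ℝ} {a b C : ℝ} (hab : a ≤ b)
    (hf : Measurable f) (hC : ∀ x ∈ Ioo a b, |f x| ≤ C) : IntervalIntegrable f volume a b := by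
  rw [intervalIntegrable_iff_integrableOn_Ioo_of_le hab]
  exact Measure.integrableOn_of_bounded measure_Ioo_lt_top.ne hf.aestronglyMeasurable
    ((ae_restrict_mem measurableSet_Ioo).mono hC)

lemma tendsto_intervalIntegral_comp_sub_mul_s10 {f g : ℝ → ℝ} {c C : ℝ} (hfm : Measurable f)
    (hfC : ∀ x > 0, |f x| ≤ C) (hf : Tendsto f atTop (𝓝 c)) (hg : IntegrableOn g (Ioi 0)) :
    Tendsto (fun b => ∫ y in 0..b, f (b - y) * g y) atTop (𝓝 (c * ∫ y in Ioi 0, g y)) := by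
  set F : ℝ → ℝ → ℝ := fun b => (Iio b).indicator fun y => f (b - y) * g y
  have hF : ∀ b ≥ 0, ∫ y in Ioi 0, F b y = ∫ y in 0..b, f (b - y) * g y := fun b hb => by
    rw [setIntegral_indicator measurableSet_Iio, Ioi_inter_Iio, intervalIntegral.integral_of_le hb,
      integral_Ioc_eq_integral_Ioo]
  have hC : 0 ≤ C := (abs_nonneg _).trans (hfC 1 one_pos)
  rw [← integral_const_mul]
  refine (tendsto_integral_filter_of_dominated_convergence (F := F) (fun y => C * ‖g y‖) ?_ ?_
    (hg.norm.const_mul C) ?_).congr' ?_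
  · exact .of_forall fun b =>
      ((hfm.comp (measurable_const.sub measurable_id)).aestronglyMeasurable.mul
        hg.aestronglyMeasurable).indicator measurableSet_Iio
  · refine .of_forall fun b => (ae_restrict_mem measurableSet_Ioi).mono fun y hy => ?_
    by_cases hyb : y < b
    · simp only [F, indicator_of_mem (mem_Iio.2 hyb), norm_mul, Real.norm_eq_abs]
      exact mul_le_mul_of_nonneg_right (hfC _ (sub_pos.2 hyb)) (abs_nonneg _)
    · simp only [F, indicator_of_notMem (notMem_Iio.2 (not_lt.1 hyb)), norm_zero]
      positivity
  · refine .of_forall fun y => ((hf.comp_sub_const_atTop y).mul_const (g y)).congr' ?_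
    filter_upwards [eventually_gt_atTop y] with b hb
    simp [F, hb]
  · filter_upwards [eventually_ge_atTop 0] with b hb using hF b hb

lemma integrable_of_integrableOn_Ioi_of_eq_zero {f : ℝ → ℝ} {a : ℝ} (hf : IntegrableOn f (Ioi a))
    (h0 : ∀ x < a, f x = 0) : Integrable f := by
  rw [← integrableOn_univ, ← Iic_union_Ioi (a := a)]
  refine IntegrableOn.union ?_ hf
  rw [integrableOn_Iic_iff_integrableOn_Iio]
  exact integrableOn_zero.congr_fun (fun x hx => (h0 x hx).symm) measurableSet_Iio

lemma integral_Ioi_comp_sub_right (f : ℝ → ℝ) (a b : ℝ) :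
    ∫ y in Ioi b, f (y - a) = ∫ y in Ioi (b - a), f y := by
  simpa using (measurePreserving_sub_right volume a).setIntegral_preimage_emb
    (MeasurableEquiv.subRight a).measurableEmbedding f (Ioi (b - a))

section Renewal

variable {r c : ℝ} {v w : ℝ → ℝ}

lemma le_of_renewal (hr : 0 ≤ r) (hv : ∀ x, 0 ≤ v x) (hw : ∀ x, 0 ≤ w x)
    (hren : ∀ x ≥ 0, v x = w x + r * ∫ y in 0..x, v (x - y) * w y) {x : ℝ} (hx : 0 ≤ x) :
    w x ≤ v x := by
  have : 0 ≤ ∫ y in 0..x, v (x - y) * w y :=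
    intervalIntegral.integral_nonneg hx fun y _ => mul_nonneg (hv _) (hw y)
  nlinarith [hren x hx]

lemma intervalIntegral_le_of_renewal (hr : 0 < r) (hc : 0 < c) (hvm : Measurable v)
    (hwm : Measurable w) (hv : ∀ x, 0 ≤ v x) (hw : ∀ x, 0 ≤ w x) (hvc : ∀ x > 0, v x ≤ c)
    (hvlim : Tendsto v atTop (𝓝 c))
    (hren : ∀ x ≥ 0, v x = w x + r * ∫ y in 0..x, v (x - y) * w y) {M : ℝ} (hM : 0 ≤ M) :
    ∫ y in 0..M, w y ≤ 2 / r := by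
  obtain ⟨T, hT⟩ := eventually_atTop.1 <|
    (hvlim.eventually (eventually_ge_nhds (half_lt_self hc))).and (eventually_gt_atTop 0)
  have hT0 : 0 < T := (hT T le_rfl).2
  set x := M + T
  have hwc : ∀ y > 0, w y ≤ c := fun y hy =>
    (le_of_renewal hr.le hv hw hren hy.le).trans (hvc y hy)
  have hint : IntervalIntegrable (fun y => v (x - y) * w y) volume 0 x :=
    intervalIntegrable_of_abs_le_on_Ioo (C := c * c) (by positivity)
      ((hvm.comp (measurable_const.sub measurable_id)).mul hwm) fun y hy => by
        rw [abs_mul, abs_of_nonneg (hv _), abs_of_nonneg (hw _)]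
        exact mul_le_mul (hvc _ (sub_pos.2 hy.2)) (hwc _ hy.1) (hw _) hc.le
  have hwint : IntervalIntegrable w volume 0 M :=
    intervalIntegrable_of_abs_le_on_Ioo hM hwm fun y hy =>
      (abs_of_nonneg (hw y)).trans_le (hwc y hy.1)
  have hsub : uIcc 0 M ⊆ uIcc 0 x := by
    rw [uIcc_of_le hM, uIcc_of_le (by positivity)]
    exact Icc_subset_Icc le_rfl (by linarith)
  refine le_of_mul_le_mul_left ?_ (half_pos hc)
  calc c / 2 * ∫ y in 0..M, w y = ∫ y in 0..M, c / 2 * w y :=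
        (intervalIntegral.integral_const_mul _ _).symm
    _ ≤ ∫ y in 0..M, v (x - y) * w y :=
        intervalIntegral.integral_mono_on hM (hwint.const_mul _) (hint.mono_set hsub)
          fun y hy => mul_le_mul_of_nonneg_right (hT _ (by linarith [hy.2])).1 (hw y)
    _ ≤ ∫ y in 0..x, v (x - y) * w y :=
        intervalIntegral.integral_mono_interval le_rfl hM (by linarith)
          (.of_forall fun y => mul_nonneg (hv _) (hw y)) hint
    _ ≤ c / r := by
        rw [le_div_iff₀' hr]
        linarith [hren x (by positivity), hvc x (by positivity), hw x]
    _ = c / 2 * (2 / r) := by ring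

lemma integrableOn_Ioi_of_renewal (hr : 0 < r) (hc : 0 < c) (hvm : Measurable v)
    (hwm : Measurable w) (hv : ∀ x, 0 ≤ v x) (hw : ∀ x, 0 ≤ w x) (hvc : ∀ x > 0, v x ≤ c)
    (hvlim : Tendsto v atTop (𝓝 c))
    (hren : ∀ x ≥ 0, v x = w x + r * ∫ y in 0..x, v (x - y) * w y) :
    IntegrableOn w (Ioi 0) := by
  refine integrableOn_Ioi_of_intervalIntegral_norm_bounded (2 / r) 0
    (fun n : ℕ => ?_) tendsto_natCast_atTop_atTop (.of_forall fun n => ?_)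
  · refine (intervalIntegrable_of_abs_le_on_Ioo (C := c) n.cast_nonneg hwm fun y hy => ?_).1
    rw [abs_of_nonneg (hw y)]
    exact (le_of_renewal hr.le hv hw hren hy.1.le).trans (hvc y hy.1)
  · simp only [Real.norm_of_nonneg (hw _)]
    exact intervalIntegral_le_of_renewal hr hc hvm hwm hv hw hvc hvlim hren n.cast_nonneg

lemma mul_integral_eq_one_and_tendsto_zero_of_renewal {C : ℝ} (hc : c ≠ 0) (hvm : Measurable v)
    (hvC : ∀ x > 0, |v x| ≤ C) (hvlim : Tendsto v atTop (𝓝 c)) (hwi : IntegrableOn w (Ioi 0))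
    (hren : ∀ x ≥ 0, v x = w x + r * ∫ y in 0..x, v (x - y) * w y) :
    r * ∫ y in Ioi 0, w y = 1 ∧ Tendsto w atTop (𝓝 0) := by
  have hlim : Tendsto w atTop (𝓝 (c - r * (c * ∫ y in Ioi 0, w y))) := by
    have hconv := (tendsto_intervalIntegral_comp_sub_mul_s10 hvm hvC hvlim hwi).const_mul r
    refine (hvlim.sub hconv).congr' ?_
    filter_upwards [eventually_ge_atTop 0] with x hx
    linarith [hren x hx]
  have h0 := eq_zero_of_integrableOn_Ioi_of_tendsto hwi hlim
  exact ⟨mul_left_cancel₀ hc (by linear_combination -h0), h0 ▸ hlim⟩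

end Renewal

noncomputable def expTilt (Φ : ℝ) (f : ℝ → ℝ) (x : ℝ) : ℝ := Real.exp (-Φ * x) * f x

lemma exp_mul_expTilt (Φ : ℝ) (f : ℝ → ℝ) (x : ℝ) : Real.exp (Φ * x) * expTilt Φ f x = f x := by
  rw [expTilt, ← mul_assoc, ← Real.exp_add, neg_mul, add_neg_cancel, Real.exp_zero, one_mul]

lemma expTilt_sub_mul_expTilt (Φ : ℝ) (f g : ℝ → ℝ) (x y : ℝ) :
    expTilt Φ f (x - y) * expTilt Φ g y = Real.exp (-Φ * x) * (f (x - y) * g y) := by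
  rw [expTilt, expTilt, show -Φ * x = -Φ * (x - y) + -Φ * y by ring, Real.exp_add]
  ring

lemma expTilt_comp_sub (Φ : ℝ) (f : ℝ → ℝ) (a : ℝ) :
    expTilt Φ (fun z => f (z - a)) = fun y => Real.exp (-Φ * a) * expTilt Φ f (y - a) := by
  funext y
  rw [expTilt, expTilt, show -Φ * y = -Φ * a + -Φ * (y - a) by ring, Real.exp_add]
  ring

lemma expTilt_renewal {Φ r : ℝ} {W V : ℝ → ℝ}
    (hren : ∀ x ≥ 0, V x = W x + r * ∫ y in 0..x, V (x - y) * W y) (x : ℝ) (hx : 0 ≤ x) :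
    expTilt Φ V x = expTilt Φ W x + r * ∫ y in 0..x, expTilt Φ V (x - y) * expTilt Φ W y := by
  simp_rw [expTilt_sub_mul_expTilt, intervalIntegral.integral_const_mul]
  rw [expTilt, expTilt, hren x hx]
  ring

lemma tendsto_comp_sub_div_of_expTilt {Φ a c : ℝ} {F G : ℝ → ℝ} (hc : c ≠ 0)
    (hF : Tendsto (expTilt Φ F) atTop (𝓝 0)) (hG : Tendsto (expTilt Φ G) atTop (𝓝 c)) :
    Tendsto (fun b => F (b - a) / G b) atTop (𝓝 0) := by
  have key : ∀ b,
      F (b - a) / G b = Real.exp (-Φ * a) * (expTilt Φ F (b - a) / expTilt Φ G b) := by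
    intro b
    rw [← exp_mul_expTilt Φ F (b - a), ← exp_mul_expTilt Φ G b, mul_div_mul_comm, ← Real.exp_sub]
    congr 2
    ring
  simpa [key] using ((hF.comp_sub_const_atTop a).div hG hc).const_mul (Real.exp (-Φ * a))

lemma tendsto_intervalIntegral_comp_sub_mul_div {Φ c C : ℝ} {V G : ℝ → ℝ} (hc : c ≠ 0)
    (hvm : Measurable (expTilt Φ V)) (hvC : ∀ x > 0, |expTilt Φ V x| ≤ C)
    (hv : Tendsto (expTilt Φ V) atTop (𝓝 c)) (hg : IntegrableOn (expTilt Φ G) (Ioi 0)) :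
    Tendsto (fun b => (∫ y in 0..b, V (b - y) * G y) / V b) atTop
      (𝓝 (∫ y in Ioi 0, expTilt Φ G y)) := by
  have key : ∀ b, (∫ y in 0..b, V (b - y) * G y) / V b
      = (∫ y in 0..b, expTilt Φ V (b - y) * expTilt Φ G y) / expTilt Φ V b := by
    intro b
    simp_rw [expTilt_sub_mul_expTilt, intervalIntegral.integral_const_mul]
    rw [expTilt, mul_div_mul_left _ _ (Real.exp_ne_zero _)]
  have := (tendsto_intervalIntegral_comp_sub_mul_s10 hvm hvC hv hg).div hv hc
  rw [mul_div_cancel_left₀ _ hc] at this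
  exact this.congr fun b => (key b).symm

lemma tendsto_intervalIntegral_div_of_expTilt {Φ c C : ℝ} {V : ℝ → ℝ} (hΦ : 0 < Φ) (hc : c ≠ 0)
    (hvm : Measurable (expTilt Φ V)) (hvC : ∀ x > 0, |expTilt Φ V x| ≤ C)
    (hv : Tendsto (expTilt Φ V) atTop (𝓝 c)) :
    Tendsto (fun b => (∫ y in 0..b, V y) / V b) atTop (𝓝 (1 / Φ)) := by
  have h := tendsto_intervalIntegral_comp_sub_mul_div (G := fun _ => 1) hc hvm hvC hv
    ((exp_neg_integrableOn_Ioi 0 hΦ).congr_fun (fun x _ => (mul_one _).symm) measurableSet_Ioi)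
  have hexp : ∫ y in Ioi 0, expTilt Φ (fun _ => 1) y = 1 / Φ := by
    simpa [expTilt] using integral_exp_mul_Ioi (neg_lt_zero.2 hΦ) 0
  simpa only [mul_one, intervalIntegral.integral_comp_sub_left, sub_self, sub_zero, hexp] using h

lemma tendsto_intervalIntegral_comp_sub_mul_comp_sub_div {Φ c C : ℝ} {V W : ℝ → ℝ} (a : ℝ)
    (hc : c ≠ 0) (hvm : Measurable (expTilt Φ V)) (hvC : ∀ x > 0, |expTilt Φ V x| ≤ C)
    (hv : Tendsto (expTilt Φ V) atTop (𝓝 c)) (hw : Integrable (expTilt Φ W)) :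
    Tendsto (fun b => (∫ y in 0..b, V (b - y) * W (y - a)) / V b) atTop
      (𝓝 (Real.exp (-Φ * a) * ∫ y in Ioi (-a), expTilt Φ W y)) := by
  have h := tendsto_intervalIntegral_comp_sub_mul_div (G := fun y => W (y - a)) hc hvm hvC hv
    (by rw [expTilt_comp_sub]; exact ((hw.comp_sub_right a).const_mul _).integrableOn)
  rwa [expTilt_comp_sub, integral_const_mul, integral_Ioi_comp_sub_right, zero_sub] at h

theorem stmt_10_general (r Φ' c' a : ℝ) (hr : 0 < r) (hΦ' : 0 < Φ')
    (hc' : 0 < c')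
    (W V : ℝ → ℝ) (hWnn : ∀ x, 0 ≤ W x) (hVnn : ∀ x, 0 ≤ V x)
    (hWm : Measurable W) (hVm : Measurable V)
    (hW0 : ∀ x < 0, W x = 0)
    (hconv : ∀ x ≥ (0:ℝ), V x = W x + r * ∫ y in (0:ℝ)..x, V (x - y) * W y)
    (hVmono : MonotoneOn (fun x => Real.exp (-Φ' * x) * V x) (Set.Ioi 0))
    (hVlim : Tendsto (fun x => Real.exp (-Φ' * x) * V x) atTop (nhds c'))
    (hWa : 0 < W (-a))
    (ZΦ' : ℝ → ℝ)
    (hZΦ' : ∀ x, ZΦ' x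
      = Real.exp (Φ' * x) * (1 - r * ∫ u in (0:ℝ)..x, Real.exp (-Φ' * u) * W u)) :
    Tendsto (fun b => ((W (b - a) + r * ∫ y in (0:ℝ)..b, V (b - y) * W (y - a)) / W (-a)
        - r * ∫ y in (0:ℝ)..b, V y) / V b)
      atTop (nhds (ZΦ' (-a) / W (-a) - r / Φ'))
    ∧ ZΦ' (-a) / W (-a) - r / Φ' = (Φ' * ZΦ' (-a) - r * W (-a)) / (W (-a) * Φ') := by
  set w := expTilt Φ' W
  set v := expTilt Φ' V
  have hvm : Measurable v := by unfold v expTilt; fun_prop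
  have hwm : Measurable w := by unfold w expTilt; fun_prop
  have hv : ∀ x, 0 ≤ v x := fun x => mul_nonneg (Real.exp_nonneg _) (hVnn x)
  have hw : ∀ x, 0 ≤ w x := fun x => mul_nonneg (Real.exp_nonneg _) (hWnn x)
  have hvc : ∀ x > 0, v x ≤ c' := fun x hx => hVmono.le_of_tendsto_Ioi hVlim hx
  have hvC : ∀ x > 0, |v x| ≤ c' := fun x hx => (abs_of_nonneg (hv x)).trans_le (hvc x hx)
  have hren := expTilt_renewal (Φ := Φ') hconv
  have hwi := integrableOn_Ioi_of_renewal hr hc' hvm hwm hv hw hvc hVlim hren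
  obtain ⟨hrI, hwlim⟩ :=
    mul_integral_eq_one_and_tendsto_zero_of_renewal hc'.ne' hvm hvC hVlim hwi hren
  have hwI : Integrable w :=
    integrable_of_integrableOn_Ioi_of_eq_zero hwi fun x hx => by simp [w, expTilt, hW0 x hx]
  have hL1 := tendsto_comp_sub_div_of_expTilt (a := a) hc'.ne' hwlim hVlim
  have hL2 := tendsto_intervalIntegral_comp_sub_mul_comp_sub_div a hc'.ne' hvm hvC hVlim hwI
  have hL3 := tendsto_intervalIntegral_div_of_expTilt hΦ' hc'.ne' hvm hvC hVlim
  have hZ : ZΦ' (-a) = Real.exp (-Φ' * a) * (r * ∫ y in Ioi (-a), w y) := by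
    have hsplit := intervalIntegral.integral_interval_add_Ioi (a := 0) (b := -a)
      hwI.integrableOn hwI.integrableOn
    rw [hZΦ', show Φ' * -a = -Φ' * a by ring]
    simp only [w, expTilt] at hsplit hrI ⊢
    linear_combination (-Real.exp (-Φ' * a)) * hrI - Real.exp (-Φ' * a) * r * hsplit
  refine ⟨?_, by field_simp⟩
  rw [show ZΦ' (-a) / W (-a) - r / Φ'
      = (0 + r * (Real.exp (-Φ' * a) * ∫ y in Ioi (-a), w y)) / W (-a) - r * (1 / Φ') by
    rw [hZ]; ring]
  exact (((hL1.add (hL2.const_mul r)).div_const (W (-a))).sub (hL3.const_mul r)).congr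
    fun b => by ring

/-- Lemma B.3(i), convergence of `I_a^{(q,r)}(b)/W^{(q+r)}(b)` as `b → ∞`,
together with the identity between the two expressions for the limit. -/
theorem stmt_10 (q r Φ' c' a : ℝ) (hq : 0 ≤ q) (hr : 0 < r) (hΦ' : 0 < Φ')
    (hc' : 0 < c') (ha : a < 0)
    (W V : ℝ → ℝ) (hWnn : ∀ x, 0 ≤ W x) (hVnn : ∀ x, 0 ≤ V x)
    (hWm : Measurable W) (hVm : Measurable V)
    (hWloc : ∀ K : Set ℝ, IsCompact K → ∃ C, ∀ x ∈ K, |W x| ≤ C)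
    (hVloc : ∀ K : Set ℝ, IsCompact K → ∃ C, ∀ x ∈ K, |V x| ≤ C)
    (hW0 : ∀ x < 0, W x = 0) (hV0 : ∀ x < 0, V x = 0)
    (hconv : ∀ x ≥ (0:ℝ), V x = W x + r * ∫ y in (0:ℝ)..x, V (x - y) * W y)
    (hVmono : MonotoneOn (fun x => Real.exp (-Φ' * x) * V x) (Set.Ioi 0))
    (hVlim : Tendsto (fun x => Real.exp (-Φ' * x) * V x) atTop (nhds c'))
    (hWa : 0 < W (-a))
    (ZΦ' : ℝ → ℝ)
    (hZΦ' : ∀ x, ZΦ' x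
      = Real.exp (Φ' * x) * (1 - r * ∫ u in (0:ℝ)..x, Real.exp (-Φ' * u) * W u)) :
    Tendsto (fun b => ((W (b - a) + r * ∫ y in (0:ℝ)..b, V (b - y) * W (y - a)) / W (-a)
        - r * ∫ y in (0:ℝ)..b, V y) / V b)
      atTop (nhds (ZΦ' (-a) / W (-a) - r / Φ'))
    ∧ ZΦ' (-a) / W (-a) - r / Φ' = (Φ' * ZΦ' (-a) - r * W (-a)) / (W (-a) * Φ') :=
  stmt_10_general r Φ' c' a hr hΦ' hc' W V hWnn hVnn hWm hVm hW0 hconv hVmono hVlim hWa ZΦ' hZΦ'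
end

section
/- Let q > 0, r > 0, reals 0 < Φ < Φ′, c, c′ ∈ (0,∞), and a < 0. Let W : ℝ → ℝ be nonnegative, Borel measurable, vanish on (−∞,0), satisfy W(z) ≤ c·e^{Φz} for all z ≥ 0 and ∫₀^∞ e^{−Φ′z}W(z)dz = 1/r. Let V : ℝ → ℝ be nonnegative, vanish on (−∞,0), locally integrable, with x ↦ e^{−Φ′x}·V(x) nondecreasing on (0,∞) converging to c′. Set W̄(x):=∫₀ˣW, Z(x):=1+q·W̄(x), Z(x,Φ′):=e^{Φ′x}(1−r∫₀ˣ e^{−Φ′z}W(z)dz), and V̄(b):=∫₀ᵇV. Then lim_{b→∞} [Z(b−a) + r·∫₀ᵇ V(b−y)·Z(y−a) dy − r·Z(−a)·V̄(b)] / V(b) = q·Z(−a,Φ′)/Φ′. -/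
/-!
Put `G y = ∫₀^y W (s - a) ds`, so that `Z (y - a) = Z (-a) + q G y`. The terms carrying `Z (-a)`
cancel and the numerator becomes `Z (b - a) + q r ∫₀^b V (b - y) G y dy`.

With `f x = e^{-Φ' x} V x` we have `V (b - y) / V b = e^{-Φ' y} f (b - y) / f b`. As `f` is
nondecreasing with limit `c' > 0`, this lies in `[0, e^{-Φ' y}]` for `0 < y < b` and tends to
`e^{-Φ' y}`, so by dominated convergence the second term over `V b` tends to
`q r ∫₀^∞ e^{-Φ' y} G y dy`. Fubini turns this into `(q r / Φ') ∫₀^∞ e^{-Φ' s} W (s - a) ds`, and a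
translation plus `∫₀^∞ e^{-Φ' t} W t dt = 1 / r` identify it with `q Z (-a, Φ') / Φ'`. The first
term is `O(e^{Φ b})` while `V b ≍ e^{Φ' b}`, so it vanishes in the limit.
-/

open MeasureTheory Filter Set Asymptotics Topology

theorem MeasureTheory.LocallyIntegrable.intervalIntegrable {E : Type*} [NormedAddCommGroup E]
    {f : ℝ → E} (hf : LocallyIntegrable f volume) (a b : ℝ) :
    IntervalIntegrable f volume a b :=
  intervalIntegrable_iff.mpr <| (hf.integrableOn_isCompact isCompact_uIcc).mono_set uIoc_subset_uIcc

theorem locallyIntegrable_of_norm_le_exp {W : ℝ → ℝ} {c Φ : ℝ}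
    (hWm : AEStronglyMeasurable W volume) (hW0 : ∀ x < 0, W x = 0)
    (hW : ∀ z ≥ 0, ‖W z‖ ≤ c * Real.exp (Φ * z)) :
    LocallyIntegrable W volume := by
  refine (by fun_prop : Continuous fun x => c * Real.exp (Φ * |x|)).locallyIntegrable.mono hWm
    (ae_of_all _ fun x => ?_)
  rcases lt_or_ge x 0 with hx | hx
  · rw [hW0 x hx, norm_zero]; exact norm_nonneg _
  · rw [abs_of_nonneg hx, norm_mul, Real.norm_of_nonneg (Real.exp_pos _).le]
    exact (hW x hx).trans (mul_le_mul_of_nonneg_right (le_abs_self c) (Real.exp_pos _).le)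

theorem integral_comp_sub_right_eq_sub {W : ℝ → ℝ} (hW : LocallyIntegrable W volume)
    (a y : ℝ) :
    ∫ s in (0:ℝ)..y, W (s - a)
      = (∫ s in (0:ℝ)..(y - a), W s) - ∫ s in (0:ℝ)..(-a), W s := by
  rw [intervalIntegral.integral_comp_sub_right, zero_sub,
    intervalIntegral.integral_interval_sub_left (hW.intervalIntegrable _ _)
      (hW.intervalIntegrable _ _)]

theorem integral_Ioi_exp_neg_mul {k : ℝ} (hk : 0 < k) (s : ℝ) :
    ∫ y in Ioi s, Real.exp (-k * y) = Real.exp (-k * s) / k := by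
  rw [integral_exp_mul_Ioi (neg_neg_of_pos hk), neg_div_neg_eq]

theorem integrableOn_exp_neg_mul_of_norm_le {g : ℝ → ℝ} {C Φ k : ℝ} (hΦk : Φ < k)
    (hgm : AEStronglyMeasurable g (volume.restrict (Ioi 0)))
    (hg : ∀ z > 0, ‖g z‖ ≤ C * Real.exp (Φ * z)) :
    IntegrableOn (fun z => Real.exp (-k * z) * g z) (Ioi 0) := by
  refine Integrable.mono' ((exp_neg_integrableOn_Ioi 0 (sub_pos.mpr hΦk)).const_mul C)
    ((by fun_prop : Continuous fun z => Real.exp (-k * z)).aestronglyMeasurable.mul hgm) ?_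
  filter_upwards [ae_restrict_mem measurableSet_Ioi] with z hz
  calc ‖Real.exp (-k * z) * g z‖ = Real.exp (-k * z) * ‖g z‖ := by
        rw [norm_mul, Real.norm_of_nonneg (Real.exp_pos _).le]
    _ ≤ Real.exp (-k * z) * (C * Real.exp (Φ * z)) := by gcongr; exact hg z hz
    _ = C * Real.exp (-(k - Φ) * z) := by
        rw [mul_left_comm, ← Real.exp_add]; ring_nf

theorem integrableOn_exp_neg_mul_comp_sub {W : ℝ → ℝ} {c Φ k a : ℝ} (hΦk : Φ < k)
    (hWm : Measurable W) (hW : ∀ z ≥ 0, ‖W z‖ ≤ c * Real.exp (Φ * z)) (ha : a ≤ 0) :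
    IntegrableOn (fun s => Real.exp (-k * s) * W (s - a)) (Ioi 0) := by
  refine integrableOn_exp_neg_mul_of_norm_le (C := c * Real.exp (-(Φ * a))) hΦk
    (hWm.comp (measurable_sub_const a)).aestronglyMeasurable.restrict fun s hs => ?_
  rw [mul_assoc, ← Real.exp_add]
  exact (hW _ (by linarith)).trans_eq (by ring_nf)

theorem integral_Ioi_exp_neg_mul_comp_sub {W : ℝ → ℝ} {k a : ℝ}
    (hW : IntegrableOn (fun t => Real.exp (-k * t) * W t) (Ioi 0)) (ha : a ≤ 0) :
    ∫ s in Ioi 0, Real.exp (-k * s) * W (s - a)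
      = Real.exp (-k * a) * ((∫ t in Ioi 0, Real.exp (-k * t) * W t)
          - ∫ t in (0:ℝ)..(-a), Real.exp (-k * t) * W t) := by
  calc ∫ s in Ioi 0, Real.exp (-k * s) * W (s - a)
      = ∫ s in (fun s => s - a) ⁻¹' Ioi (-a),
          Real.exp (-k * a) * (Real.exp (-k * (s - a)) * W (s - a)) := by
        rw [preimage_sub_const_Ioi, neg_add_cancel]
        refine setIntegral_congr_fun measurableSet_Ioi fun s _ => ?_
        rw [← mul_assoc, ← Real.exp_add]; ring_nf
    _ = Real.exp (-k * a) * ∫ t in Ioi (-a), Real.exp (-k * t) * W t := by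
        rw [integral_const_mul, (measurePreserving_sub_right volume a).setIntegral_preimage_emb
          (measurableEmbedding_subRight a) (fun t => Real.exp (-k * t) * W t)]
    _ = _ := by rw [← intervalIntegral.integral_Ioi_sub_Ioi hW (neg_nonneg.mpr ha)]; ring

namespace LaplacePrimitive

variable {k : ℝ} {g : ℝ → ℝ}

noncomputable def kernel (k : ℝ) (g : ℝ → ℝ) (y s : ℝ) : ℝ :=
  (Ioi 0).indicator g s * (Ici s).indicator (fun y => Real.exp (-k * y)) y

theorem kernel_eq (y s : ℝ) : kernel k g y s = Real.exp (-k * y) * (Ioc 0 y).indicator g s := by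
  by_cases hs : 0 < s <;> by_cases hsy : s ≤ y <;> simp [kernel, indicator, hs, hsy, mul_comm]

theorem integral_kernel_left (hk : 0 < k) (s : ℝ) :
    ∫ y, kernel k g y s = (Ioi 0).indicator g s * (Real.exp (-k * s) / k) := by
  simp only [kernel]
  rw [integral_const_mul, integral_indicator measurableSet_Ici,
    integral_Ici_eq_integral_Ioi, integral_Ioi_exp_neg_mul hk]

theorem integral_kernel_right (y : ℝ) :
    ∫ s, kernel k g y s = Real.exp (-k * y) * ∫ s in Ioc 0 y, g s := by
  simp_rw [kernel_eq, integral_const_mul, integral_indicator measurableSet_Ioc]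

theorem kernel_norm (y s : ℝ) : ‖kernel k g y s‖ = kernel k (fun s => ‖g s‖) y s := by
  simp only [kernel, norm_mul, norm_indicator_eq_indicator_norm,
    Real.norm_of_nonneg (Real.exp_pos _).le]

theorem integrable_kernel (hk : 0 < k)
    (hg : IntegrableOn (fun s => Real.exp (-k * s) * g s) (Ioi 0)) :
    Integrable (Function.uncurry (kernel k g)) (volume.prod volume) := by
  have hgm : AEStronglyMeasurable ((Ioi 0).indicator g) volume := by
    refine aestronglyMeasurable_indicator_iff measurableSet_Ioi |>.mpr ?_
    refine (((by fun_prop : Continuous fun s => Real.exp (k * s)).aestronglyMeasurable).mul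
      hg.aestronglyMeasurable).congr (ae_of_all _ fun s => ?_)
    simp only [Pi.mul_apply, ← mul_assoc, ← Real.exp_add, neg_mul, add_neg_cancel,
      Real.exp_zero, one_mul]
  have hexp : Measurable fun p : ℝ × ℝ => Real.exp (-k * p.1) := by fun_prop
  have hm : AEStronglyMeasurable (Function.uncurry (kernel k g)) (volume.prod volume) :=
    ((hgm.comp_snd (μ := volume)).mul (hexp.indicator
      (measurableSet_le measurable_snd measurable_fst)).aestronglyMeasurable).congr
      (ae_of_all _ fun p => by simp [kernel, indicator, Function.uncurry])
  rw [integrable_prod_iff' hm]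
  refine ⟨ae_of_all _ fun s => ?_, ?_⟩
  · simp only [Function.uncurry, kernel]
    exact (((integrableOn_Ici_iff_integrableOn_Ioi).mpr
      (exp_neg_integrableOn_Ioi s hk)).integrable_indicator measurableSet_Ici).const_mul _
  · simp_rw [Function.uncurry, kernel_norm, integral_kernel_left hk]
    have h : ∀ s, (Ioi 0).indicator (fun s => ‖g s‖) s * (Real.exp (-k * s) / k)
        = (Ioi 0).indicator (fun s => ‖Real.exp (-k * s) * g s‖ / k) s := fun s => by
      by_cases hs : s ∈ Ioi 0
      · simp only [indicator_of_mem hs, norm_mul, Real.norm_of_nonneg (Real.exp_pos _).le]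
        ring
      · simp only [indicator_of_notMem hs, zero_mul]
    simp_rw [h]
    exact (integrable_indicator_iff measurableSet_Ioi).mpr (hg.norm.div_const k)

theorem integral_kernel_right_of_nonneg {y : ℝ} (hy : 0 ≤ y) :
    ∫ s, kernel k g y s = Real.exp (-k * y) * ∫ s in (0:ℝ)..y, g s := by
  rw [integral_kernel_right, intervalIntegral.integral_of_le hy]

end LaplacePrimitive

open LaplacePrimitive in
theorem integrableOn_exp_neg_mul_primitive {k : ℝ} {g : ℝ → ℝ} (hk : 0 < k)
    (hg : IntegrableOn (fun s => Real.exp (-k * s) * g s) (Ioi 0)) :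
    IntegrableOn (fun y => Real.exp (-k * y) * ∫ s in (0:ℝ)..y, g s) (Ioi 0) :=
  (integrable_kernel hk hg).integral_prod_left.integrableOn.congr_fun
    (fun _ hy => integral_kernel_right_of_nonneg (le_of_lt hy)) measurableSet_Ioi

open LaplacePrimitive in
theorem integral_exp_neg_mul_primitive {k : ℝ} {g : ℝ → ℝ} (hk : 0 < k)
    (hg : IntegrableOn (fun s => Real.exp (-k * s) * g s) (Ioi 0)) :
    ∫ y in Ioi 0, Real.exp (-k * y) * ∫ s in (0:ℝ)..y, g s
      = (∫ s in Ioi 0, Real.exp (-k * s) * g s) / k := by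
  calc ∫ y in Ioi 0, Real.exp (-k * y) * ∫ s in (0:ℝ)..y, g s
      = ∫ y in Ioi 0, ∫ s, kernel k g y s :=
        setIntegral_congr_fun measurableSet_Ioi
          fun y hy => (integral_kernel_right_of_nonneg (le_of_lt hy)).symm
    _ = ∫ y, ∫ s, kernel k g y s := by
        refine setIntegral_eq_integral_of_forall_compl_eq_zero fun y hy => ?_
        rw [integral_kernel_right, Ioc_eq_empty (by simpa using hy), Measure.restrict_empty,
          integral_zero_measure, mul_zero]
    _ = ∫ s, ∫ y, kernel k g y s := integral_integral_swap (integrable_kernel hk hg)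
    _ = ∫ s in Ioi 0, Real.exp (-k * s) * g s / k := by
        simp_rw [integral_kernel_left hk, ← integral_indicator measurableSet_Ioi]
        congr 1 with s
        by_cases hs : s ∈ Ioi 0
        · simp only [indicator_of_mem hs]; ring
        · simp only [indicator_of_notMem hs, zero_mul]
    _ = (∫ s in Ioi 0, Real.exp (-k * s) * g s) / k := integral_div _ _

theorem tendsto_integral_mul_of_tendsto_one {α ι : Type*} [MeasurableSpace α]
    {μ : Measure α} {l : Filter ι} [l.IsCountablyGenerated] {ρ : ι → α → ℝ} {h : α → ℝ}
    (hρm : ∀ᶠ i in l, AEStronglyMeasurable (ρ i) μ) (hρ : ∀ᶠ i in l, ∀ᵐ x ∂μ, ‖ρ i x‖ ≤ 1)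
    (hlim : ∀ᵐ x ∂μ, Tendsto (fun i => ρ i x) l (𝓝 1)) (hh : Integrable h μ) :
    Tendsto (fun i => ∫ x, ρ i x * h x ∂μ) l (𝓝 (∫ x, h x ∂μ)) := by
  refine tendsto_integral_filter_of_dominated_convergence (fun x => ‖h x‖)
    (hρm.mono fun i hi => hi.mul hh.aestronglyMeasurable) ?_ hh.norm
    (hlim.mono fun x hx => by simpa using hx.mul_const (h x))
  filter_upwards [hρ] with i hi
  filter_upwards [hi] with x hx
  rw [norm_mul]
  exact mul_le_of_le_one_left (norm_nonneg _) hx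

theorem integral_sub_mul_div_eq {V G : ℝ → ℝ} {k b : ℝ} (hb : 0 ≤ b) :
    (∫ y in (0:ℝ)..b, V (b - y) * G y) / V b
      = ∫ y in Ioi 0, (Iio b).indicator
          (fun y => Real.exp (-k * (b - y)) * V (b - y) / (Real.exp (-k * b) * V b)) y
          * (Real.exp (-k * y) * G y) := by
  rw [intervalIntegral.integral_of_le hb, integral_Ioc_eq_integral_Ioo, ← integral_div]
  simp_rw [← indicator_mul_left (Iio b) _ fun y => Real.exp (-k * y) * G y]
  rw [setIntegral_indicator measurableSet_Iio, Ioi_inter_Iio]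
  refine setIntegral_congr_fun measurableSet_Ioo fun y _ => ?_
  have hexp : Real.exp (-k * (b - y)) * Real.exp (-k * y) = Real.exp (-k * b) := by
    rw [← Real.exp_add]; ring_nf
  calc V (b - y) * G y / V b
      = Real.exp (-k * b) * (V (b - y) * G y) / (Real.exp (-k * b) * V b) :=
        (mul_div_mul_left _ _ (Real.exp_ne_zero _)).symm
    _ = _ := by rw [← hexp]; ring

theorem tendsto_integral_sub_mul_div {V G : ℝ → ℝ} {k c : ℝ} (hc : 0 < c)
    (hVnn : ∀ x, 0 ≤ V x) (hVm : AEStronglyMeasurable V volume)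
    (hVmono : MonotoneOn (fun x => Real.exp (-k * x) * V x) (Ioi 0))
    (hVlim : Tendsto (fun x => Real.exp (-k * x) * V x) atTop (𝓝 c))
    (hG : IntegrableOn (fun y => Real.exp (-k * y) * G y) (Ioi 0)) :
    Tendsto (fun b => (∫ y in (0:ℝ)..b, V (b - y) * G y) / V b) atTop
      (𝓝 (∫ y in Ioi 0, Real.exp (-k * y) * G y)) := by
  set f := fun x => Real.exp (-k * x) * V x
  have hfm : AEStronglyMeasurable f volume :=
    (by fun_prop : Continuous fun x => Real.exp (-k * x)).aestronglyMeasurable.mul hVm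
  have hfpos : ∀ᶠ b in atTop, 0 < f b := hVlim.eventually (eventually_gt_nhds hc)
  refine (tendsto_integral_mul_of_tendsto_one
    (ρ := fun b => (Iio b).indicator fun y => f (b - y) / f b) ?_ ?_ ?_ hG).congr' ?_
  · refine Eventually.of_forall fun b => ?_
    have hshift : AEStronglyMeasurable (fun y => f (b - y)) volume :=
      hfm.comp_quasiMeasurePreserving
        (Measure.measurePreserving_sub_left volume b).quasiMeasurePreserving
    exact ((hshift.div₀ aestronglyMeasurable_const).indicator measurableSet_Iio).restrict
  · filter_upwards [hfpos] with b hb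
    filter_upwards [ae_restrict_mem measurableSet_Ioi] with y (hy : 0 < y)
    by_cases hyb : y < b
    · have hf0 : 0 ≤ f (b - y) := mul_nonneg (Real.exp_pos _).le (hVnn _)
      rw [indicator_of_mem (mem_Iio.mpr hyb), Real.norm_of_nonneg (div_nonneg hf0 hb.le),
        div_le_one hb]
      exact hVmono (by simpa using hyb) (by simpa using hy.trans hyb) (by linarith)
    · rw [indicator_of_notMem (by simpa using hyb), norm_zero]; exact zero_le_one
  · refine ae_of_all _ fun y => ?_
    have hshift : Tendsto (fun b => f (b - y)) atTop (𝓝 c) := by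
      refine (hVlim.comp (tendsto_atTop_add_const_right atTop (-y) tendsto_id)).congr fun b => ?_
      simp [sub_eq_add_neg]
    have hratio := hshift.div hVlim hc.ne'
    rw [div_self hc.ne'] at hratio
    refine hratio.congr' ?_
    filter_upwards [eventually_gt_atTop y] with b hb
    rw [Pi.div_apply, indicator_of_mem (mem_Iio.mpr hb)]
  · filter_upwards [eventually_ge_atTop 0] with b hb
    exact (integral_sub_mul_div_eq hb).symm

theorem integral_sub_mul_const_add_mul {V G : ℝ → ℝ} (hV : LocallyIntegrable V volume)
    (hG : Continuous G) (z q b : ℝ) :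
    ∫ y in (0:ℝ)..b, V (b - y) * (z + q * G y)
      = z * (∫ y in (0:ℝ)..b, V y) + q * ∫ y in (0:ℝ)..b, V (b - y) * G y := by
  have hVb : IntervalIntegrable (fun y => V (b - y)) volume 0 b := by
    simpa using (hV.intervalIntegrable b 0).comp_sub_left b
  calc ∫ y in (0:ℝ)..b, V (b - y) * (z + q * G y)
      = ∫ y in (0:ℝ)..b, (V (b - y) * z + q * (V (b - y) * G y)) := by
        congr 1 with y; ring
    _ = (∫ y in (0:ℝ)..b, V (b - y)) * z + q * ∫ y in (0:ℝ)..b, V (b - y) * G y := by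
        rw [intervalIntegral.integral_add (hVb.mul_const z)
          ((hVb.mul_continuousOn hG.continuousOn).const_mul q),
          intervalIntegral.integral_mul_const, intervalIntegral.integral_const_mul]
    _ = _ := by rw [intervalIntegral.integral_comp_sub_left]; simp only [sub_self, sub_zero]; ring

theorem isBigO_primitive_exp {W : ℝ → ℝ} {c Φ : ℝ} (hc : 0 ≤ c) (hΦ : 0 < Φ)
    (hW : ∀ z ≥ 0, ‖W z‖ ≤ c * Real.exp (Φ * z)) :
    (fun x => ∫ y in (0:ℝ)..x, W y) =O[atTop] fun x => Real.exp (Φ * x) := by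
  refine IsBigO.of_bound (c / Φ) ?_
  filter_upwards [eventually_ge_atTop 0] with x hx
  have hexp : ∫ y in (0:ℝ)..x, c * Real.exp (Φ * y) = c / Φ * (Real.exp (Φ * x) - 1) := by
    rw [intervalIntegral.integral_const_mul, intervalIntegral.integral_comp_mul_left
      (fun y => Real.exp y) hΦ.ne', integral_exp, mul_zero, Real.exp_zero, smul_eq_mul]
    ring
  calc ‖∫ y in (0:ℝ)..x, W y‖ ≤ ∫ y in (0:ℝ)..x, c * Real.exp (Φ * y) :=
        intervalIntegral.norm_integral_le_of_norm_le hx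
          (ae_of_all _ fun y hy => hW y hy.1.le)
          ((by fun_prop : Continuous fun y => c * Real.exp (Φ * y)).intervalIntegrable _ _)
    _ ≤ c / Φ * ‖Real.exp (Φ * x)‖ := by
        rw [hexp, Real.norm_of_nonneg (Real.exp_pos _).le]
        gcongr
        linarith

theorem isBigO_exp_of_tendsto_exp_neg_mul {V : ℝ → ℝ} {k c : ℝ} (hc : 0 < c)
    (hV : Tendsto (fun x => Real.exp (-k * x) * V x) atTop (𝓝 c)) :
    (fun x => Real.exp (k * x)) =O[atTop] V := by
  have h := ((hV.inv₀ hc.ne').isBigO_one ℝ).mul (isBigO_refl V atTop)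
  simp only [one_mul] at h
  refine h.congr' ?_ EventuallyEq.rfl
  filter_upwards [hV.eventually_ne hc.ne'] with x hx
  have hV0 : V x ≠ 0 := right_ne_zero_of_mul hx
  rw [mul_inv, inv_mul_cancel_right₀ hV0, ← Real.exp_neg]
  ring_nf

theorem tendsto_one_add_primitive_comp_sub_div {W V : ℝ → ℝ} {c c' Φ Φ' : ℝ} (hc : 0 ≤ c)
    (hΦ : 0 < Φ) (hΦΦ' : Φ < Φ') (hW : ∀ z ≥ 0, ‖W z‖ ≤ c * Real.exp (Φ * z)) (hc' : 0 < c')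
    (hVlim : Tendsto (fun x => Real.exp (-Φ' * x) * V x) atTop (𝓝 c')) (q a : ℝ) :
    Tendsto (fun b => (1 + q * ∫ y in (0:ℝ)..(b - a), W y) / V b) atTop (𝓝 0) := by
  have hprim : (fun b => ∫ y in (0:ℝ)..(b - a), W y)
      =O[atTop] fun b => Real.exp (Φ * (b - a)) :=
    (isBigO_primitive_exp hc hΦ hW).comp_tendsto
      (tendsto_atTop_add_const_right _ (-a) tendsto_id)
  have hexp : (fun b => Real.exp (Φ * (b - a))) =o[atTop] fun b => Real.exp (Φ' * b) := by
    refine Real.isLittleO_exp_comp_exp_comp.mpr ?_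
    refine (tendsto_atTop_add_const_right _ (Φ * a)
      (tendsto_id.const_mul_atTop (sub_pos.mpr hΦΦ'))).congr fun b => ?_
    simp only [id]; ring
  have hone : (fun _ => (1:ℝ)) =o[atTop] fun b => Real.exp (Φ' * b) :=
    Real.isLittleO_one_exp_comp.mpr (tendsto_id.const_mul_atTop (hΦ.trans hΦΦ'))
  exact ((hone.add ((hprim.trans_isLittleO hexp).const_mul_left q)).trans_isBigO
    (isBigO_exp_of_tendsto_exp_neg_mul hc' hVlim)).tendsto_div_nhds_zero

theorem stmt_11_general (q r Φ Φ' c c' a : ℝ) (hr : 0 < r)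
    (hΦ : 0 < Φ) (hΦΦ' : Φ < Φ') (hc : 0 < c) (hc' : 0 < c') (ha : a < 0)
    (W V : ℝ → ℝ) (hWnn : ∀ x, 0 ≤ W x) (hWm : Measurable W) (hW0 : ∀ x < 0, W x = 0)
    (hWbound : ∀ z ≥ (0:ℝ), W z ≤ c * Real.exp (Φ * z))
    (hWlap : (∫ z in Set.Ioi (0:ℝ), Real.exp (-Φ' * z) * W z) = 1 / r)
    (hVnn : ∀ x, 0 ≤ V x)
    (hVli : LocallyIntegrable V volume)
    (hVmono : MonotoneOn (fun x => Real.exp (-Φ' * x) * V x) (Set.Ioi 0))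
    (hVlim : Tendsto (fun x => Real.exp (-Φ' * x) * V x) atTop (nhds c'))
    (Wbar Z ZΦ' Vbar : ℝ → ℝ)
    (hWbar : ∀ x, Wbar x = ∫ y in (0:ℝ)..x, W y)
    (hZ : ∀ x, Z x = 1 + q * Wbar x)
    (hZΦ' : ∀ x, ZΦ' x
      = Real.exp (Φ' * x) * (1 - r * ∫ z in (0:ℝ)..x, Real.exp (-Φ' * z) * W z))
    (hVbar : ∀ b, Vbar b = ∫ y in (0:ℝ)..b, V y) :
    Tendsto (fun b => (Z (b - a) + r * (∫ y in (0:ℝ)..b, V (b - y) * Z (y - a))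
        - r * Z (-a) * Vbar b) / V b)
      atTop (nhds (q * ZΦ' (-a) / Φ')) := by
  have hWnorm : ∀ z ≥ 0, ‖W z‖ ≤ c * Real.exp (Φ * z) := fun z hz => by
    rw [Real.norm_of_nonneg (hWnn z)]; exact hWbound z hz
  have hWli := locallyIntegrable_of_norm_le_exp hWm.aestronglyMeasurable hW0 hWnorm
  set G := fun y => ∫ s in (0:ℝ)..y, W (s - a) with hG
  have hZshift : ∀ y, Z (y - a) = Z (-a) + q * G y := fun y => by
    simp only [hZ, hWbar, hG, integral_comp_sub_right_eq_sub hWli]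
    ring
  have hGc : Continuous G := by
    refine intervalIntegral.continuous_primitive (fun u v => ?_) 0
    simpa using (hWli.intervalIntegrable (u - a) (v - a)).comp_sub_right a
  have hWaint := integrableOn_exp_neg_mul_comp_sub hΦΦ' hWm hWnorm ha.le
  have hWint : IntegrableOn (fun t => Real.exp (-Φ' * t) * W t) (Ioi 0) := by
    simpa using integrableOn_exp_neg_mul_comp_sub hΦΦ' hWm hWnorm le_rfl
  have hconv := tendsto_integral_sub_mul_div hc' hVnn hVli.aestronglyMeasurable hVmono hVlim
    (integrableOn_exp_neg_mul_primitive (hΦ.trans hΦΦ') hWaint)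
  rw [integral_exp_neg_mul_primitive (hΦ.trans hΦΦ') hWaint,
    integral_Ioi_exp_neg_mul_comp_sub hWint ha.le, hWlap] at hconv
  have hZlim := tendsto_one_add_primitive_comp_sub_div hc.le hΦ hΦΦ' hWnorm hc' hVlim q a
  simp only [← hWbar, ← hZ] at hZlim
  convert hZlim.add (hconv.const_mul (q * r)) using 2 with b
  · simp only [hZshift, integral_sub_mul_const_add_mul hVli hGc, hVbar]
    ring
  · rw [hZΦ']
    field_simp
    ring

/-- Lemma B.3(ii), convergence of `J_a^{(q,r)}(b)/W^{(q+r)}(b)` as `b → ∞`. -/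
theorem stmt_11 (q r Φ Φ' c c' a : ℝ) (hq : 0 < q) (hr : 0 < r)
    (hΦ : 0 < Φ) (hΦΦ' : Φ < Φ') (hc : 0 < c) (hc' : 0 < c') (ha : a < 0)
    (W V : ℝ → ℝ) (hWnn : ∀ x, 0 ≤ W x) (hWm : Measurable W) (hW0 : ∀ x < 0, W x = 0)
    (hWbound : ∀ z ≥ (0:ℝ), W z ≤ c * Real.exp (Φ * z))
    (hWlap : (∫ z in Set.Ioi (0:ℝ), Real.exp (-Φ' * z) * W z) = 1 / r)
    (hVnn : ∀ x, 0 ≤ V x) (hV0 : ∀ x < 0, V x = 0)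
    (hVli : LocallyIntegrable V volume)
    (hVmono : MonotoneOn (fun x => Real.exp (-Φ' * x) * V x) (Set.Ioi 0))
    (hVlim : Tendsto (fun x => Real.exp (-Φ' * x) * V x) atTop (nhds c'))
    (Wbar Z ZΦ' Vbar : ℝ → ℝ)
    (hWbar : ∀ x, Wbar x = ∫ y in (0:ℝ)..x, W y)
    (hZ : ∀ x, Z x = 1 + q * Wbar x)
    (hZΦ' : ∀ x, ZΦ' x
      = Real.exp (Φ' * x) * (1 - r * ∫ z in (0:ℝ)..x, Real.exp (-Φ' * z) * W z))
    (hVbar : ∀ b, Vbar b = ∫ y in (0:ℝ)..b, V y) :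
    Tendsto (fun b => (Z (b - a) + r * (∫ y in (0:ℝ)..b, V (b - y) * Z (y - a))
        - r * Z (-a) * Vbar b) / V b)
      atTop (nhds (q * ZΦ' (-a) / Φ')) :=
  stmt_11_general q r Φ Φ' c c' a hr hΦ hΦΦ' hc hc' ha W V hWnn hWm hW0 hWbound hWlap hVnn hVli
    hVmono hVlim Wbar Z ZΦ' Vbar hWbar hZ hZΦ' hVbar
end

section
/- Let q ∈ ℝ, x ≥ 0, δ ∈ ℝ, let W : ℝ → ℝ be continuous on [0,x], and let ψ : (0,∞) → ℝ be differentiable with ψ(θ) → 0 and ψ′(θ) → δ as θ ↓ 0. For θ > 0 set Z(x,θ) := e^{θx}·(1 + (q−ψ(θ))·∫₀ˣ e^{−θz}W(z)dz). Then the map θ ↦ θ·Z(x,θ) + (q−ψ(θ))·W(x) is differentiable on (0,∞), and its derivative converges, as θ ↓ 0, to (1 + q·∫₀ˣ W(z)dz) − δ·W(x). -/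
open MeasureTheory Filter Set Topology

/-!
Differentiating under the integral sign (the derivative `-z e^{-θz}` of the integrand is dominated
locally uniformly in `θ`), `I(θ) = ∫₀ˣ e^{-θz} W(z) dz` is differentiable with a derivative that is
again an integral of the same shape, hence continuous. Writing the map as `θ A(θ) + B(θ)` with
`A(θ) = e^{θx}(1 + (q - ψ θ) I(θ))` and `B(θ) = (q - ψ θ) W(x)`, its derivative is
`A + θ A' + B'`. As `θ ↓ 0`, `A'` stays bounded, so the middle term vanishes, while
`A(θ) → 1 + q I(0)` and `B'(θ) = -ψ'(θ) W(x) → -δ W(x)`.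
-/

theorem exp_neg_mul_le_of_dist_lt_one {θ θ₀ : ℝ} (hθ : dist θ θ₀ < 1) (z : ℝ) :
    Real.exp (-θ * z) ≤ Real.exp ((|θ₀| + 1) * |z|) := by
  have hθ' : |θ| ≤ |θ₀| + 1 := by
    have := abs_sub_abs_le_abs_sub θ θ₀
    rw [Real.dist_eq] at hθ
    linarith
  apply Real.exp_le_exp.2
  calc -θ * z ≤ |-θ * z| := le_abs_self _
    _ = |θ| * |z| := by rw [abs_mul, abs_neg]
    _ ≤ (|θ₀| + 1) * |z| := by gcongr

theorem hasDerivAt_intervalIntegral_exp_neg_mul {f : ℝ → ℝ} {a b : ℝ}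
    (hf : IntervalIntegrable f volume a b) (θ₀ : ℝ) :
    HasDerivAt (fun θ => ∫ z in a..b, Real.exp (-θ * z) * f z)
      (∫ z in a..b, Real.exp (-θ₀ * z) * (-z * f z)) θ₀ := by
  have hexp : ∀ θ : ℝ, Continuous fun z : ℝ => Real.exp (-θ * z) := fun θ => by fun_prop
  have hzf : IntervalIntegrable (fun z => -z * f z) volume a b :=
    hf.continuousOn_mul (by fun_prop)
  refine (intervalIntegral.hasDerivAt_integral_of_dominated_loc_of_deriv_le
    (F' := fun θ z => Real.exp (-θ * z) * (-z * f z))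
    (bound := fun z => Real.exp ((|θ₀| + 1) * |z|) * |-z * f z|)
    (Metric.ball_mem_nhds θ₀ one_pos) ?_ ?_ ?_ ?_ ?_ ?_).2
  · exact .of_forall fun θ =>
      (hf.continuousOn_mul (hexp θ).continuousOn).aestronglyMeasurable_restrict_uIoc
  · exact hf.continuousOn_mul (hexp θ₀).continuousOn
  · exact (hzf.continuousOn_mul (hexp θ₀).continuousOn).aestronglyMeasurable_restrict_uIoc
  · refine .of_forall fun z _ θ hθ => ?_
    rw [norm_mul, Real.norm_of_nonneg (Real.exp_pos _).le, Real.norm_eq_abs]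
    exact mul_le_mul_of_nonneg_right (exp_neg_mul_le_of_dist_lt_one hθ z) (abs_nonneg _)
  · exact hzf.abs.continuousOn_mul (by fun_prop)
  · refine .of_forall fun z _ θ _ => ?_
    exact (((hasDerivAt_neg θ).mul_const z).exp.mul_const (f z)).congr_deriv (by ring)

theorem tendsto_deriv_id_mul_add_nhdsGT_zero {A A' B B' : ℝ → ℝ} {a b : ℝ}
    (hA : ∀ θ > 0, HasDerivAt A (A' θ) θ) (hB : ∀ θ > 0, HasDerivAt B (B' θ) θ)
    (hA_lim : Tendsto A (𝓝[>] 0) (𝓝 a))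
    (hA'_bdd : IsBoundedUnder (· ≤ ·) (𝓝[>] 0) (norm ∘ A'))
    (hB'_lim : Tendsto B' (𝓝[>] 0) (𝓝 b)) :
    Tendsto (deriv fun θ => θ * A θ + B θ) (𝓝[>] 0) (𝓝 (a + b)) := by
  have hderiv : (fun θ => 1 * A θ + θ * A' θ + B' θ) =ᶠ[𝓝[>] 0] deriv fun θ => θ * A θ + B θ := by
    filter_upwards [self_mem_nhdsWithin] with θ hθ
    exact (((hasDerivAt_id' θ).mul (hA θ hθ)).add (hB θ hθ)).deriv.symm
  have hθA' : Tendsto (fun θ => θ * A' θ) (𝓝[>] 0) (𝓝 0) :=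
    (tendsto_nhdsWithin_of_tendsto_nhds tendsto_id).zero_mul_isBoundedUnder_le hA'_bdd
  simpa using ((hA_lim.const_mul 1).add hθA').add hB'_lim |>.congr' hderiv

/-- `θ ↦ Z^{(q)′}(x,θ) = θZ^{(q)}(x,θ) + (q−ψ(θ))W(x)` is differentiable on
`(0,∞)` and its derivative tends, as `θ ↓ 0`, to `Z^{(q)}(x) − ψ′(0+)·W(x)`. -/
theorem stmt_15 (q x δ : ℝ) (hx : 0 ≤ x)
    (W : ℝ → ℝ) (hW : ContinuousOn W (Set.Icc 0 x))
    (ψ : ℝ → ℝ) (hψdiff : ∀ θ > (0:ℝ), DifferentiableAt ℝ ψ θ)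
    (hψ0 : Tendsto ψ (nhdsWithin 0 (Set.Ioi 0)) (nhds 0))
    (hψ'0 : Tendsto (deriv ψ) (nhdsWithin 0 (Set.Ioi 0)) (nhds δ)) :
    (∀ θ ∈ Set.Ioi (0:ℝ), DifferentiableAt ℝ
        (fun θ => θ * (Real.exp (θ * x) *
            (1 + (q - ψ θ) * ∫ z in (0:ℝ)..x, Real.exp (-θ * z) * W z))
          + (q - ψ θ) * W x) θ)
    ∧ Tendsto
        (deriv (fun θ => θ * (Real.exp (θ * x) *
            (1 + (q - ψ θ) * ∫ z in (0:ℝ)..x, Real.exp (-θ * z) * W z))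
          + (q - ψ θ) * W x))
        (nhdsWithin 0 (Set.Ioi 0))
        (nhds ((1 + q * ∫ z in (0:ℝ)..x, W z) - δ * W x)) := by
  set I : ℝ → ℝ := fun θ => ∫ z in (0:ℝ)..x, Real.exp (-θ * z) * W z
  set J : ℝ → ℝ := fun θ => ∫ z in (0:ℝ)..x, Real.exp (-θ * z) * (-z * W z)
  have hWi : IntervalIntegrable W volume 0 x := (hW.mono (by rw [uIcc_of_le hx])).intervalIntegrable
  have hI : ∀ θ, HasDerivAt I (J θ) θ := hasDerivAt_intervalIntegral_exp_neg_mul hWi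
  have hJ : ContinuousAt J 0 :=
    (hasDerivAt_intervalIntegral_exp_neg_mul (hWi.continuousOn_mul (by fun_prop)) 0).continuousAt
  have hA : ∀ θ > 0, HasDerivAt (fun θ => Real.exp (θ * x) * (1 + (q - ψ θ) * I θ))
      (Real.exp (θ * x) * x * (1 + (q - ψ θ) * I θ)
        + Real.exp (θ * x) * (-deriv ψ θ * I θ + (q - ψ θ) * J θ)) θ := fun θ hθ =>
    (hasDerivAt_mul_const x).exp.mul
      ((((hψdiff θ hθ).hasDerivAt.const_sub q).mul (hI θ)).const_add 1)
  have hB : ∀ θ > 0, HasDerivAt (fun θ => (q - ψ θ) * W x) (-deriv ψ θ * W x) θ :=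
    fun θ hθ => ((hψdiff θ hθ).hasDerivAt.const_sub q).mul_const (W x)
  refine ⟨fun θ hθ => (((hasDerivAt_id' θ).mul (hA θ hθ)).add (hB θ hθ)).differentiableAt, ?_⟩
  have hexp : Tendsto (fun θ => Real.exp (θ * x)) (𝓝[>] 0) (𝓝 1) := by
    have : Continuous fun θ => Real.exp (θ * x) := by fun_prop
    simpa using (this.tendsto 0).mono_left nhdsWithin_le_nhds
  have hI0 := (hI 0).continuousAt.tendsto.mono_left (nhdsWithin_le_nhds (s := Ioi 0))
  have hJ0 := hJ.tendsto.mono_left (nhdsWithin_le_nhds (s := Ioi 0))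
  have hqψ : Tendsto (fun θ => q - ψ θ) (𝓝[>] 0) (𝓝 (q - 0)) := tendsto_const_nhds.sub hψ0
  have hC := (hqψ.mul hI0).const_add 1
  have hA'_lim := ((hexp.mul_const x).mul hC).add (hexp.mul ((hψ'0.neg.mul hI0).add (hqψ.mul hJ0)))
  convert tendsto_deriv_id_mul_add_nhdsGT_zero hA hB (hexp.mul hC)
    hA'_lim.norm.isBoundedUnder_le (hψ'0.neg.mul_const (W x)) using 2
  simp only [I, neg_zero, zero_mul, Real.exp_zero, one_mul, sub_zero]
  ring
end

section
/- Let r > 0 and reals 0 < Φ < Φ′ and c′ ∈ (0,∞). Let V : ℝ → ℝ be nonnegative, vanish on (−∞,0), be locally integrable, with x ↦ e^{−Φ′x}·V(x) nondecreasing on (0,∞) and converging to c′ as x → ∞. Then lim_{b→∞} [e^{Φb} + r·∫₀ᵇ e^{Φz}·V(b−z) dz − r·∫₀ᵇ V(z) dz] / V(b) = r·Φ/((Φ′−Φ)·Φ′). -/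
/-!
Write `V b = e^{Φ'b} g(b)` with `g(x) = e^{-Φ'x} V(x)`. Since `∫₀ᵇ V = ∫₀ᵇ V(b - z) dz`, the
quotient equals `(e^{(Φ-Φ')b} + r ∫₀ᵇ h(z) g(b - z) dz) / g(b)` with the kernel
`h(z) = e^{(Φ-Φ')z} - e^{-Φ'z}`, integrable on `(0, ∞)` with total mass `Φ / ((Φ' - Φ) Φ')`.
As `g` is bounded by `c'` and tends to `c'`, dominated convergence sends the convolution to
`c' ∫₀^∞ h`, while `e^{(Φ-Φ')b} → 0`.
-/

open MeasureTheory Filter Set Topology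

theorem MonotoneOn.ge_of_tendsto {α β : Type*} [Preorder α] [IsDirectedOrder α]
    [TopologicalSpace β] [Preorder β] [OrderClosedTopology β] {f : α → β} {a : α} {c : β}
    (hf : MonotoneOn f (Ioi a)) (hlim : Tendsto f atTop (𝓝 c)) {x : α} (hx : a < x) :
    f x ≤ c :=
  haveI : Nonempty α := ⟨x⟩
  _root_.ge_of_tendsto hlim <| (eventually_ge_atTop x).mono fun _ hy => hf hx (hx.trans_le hy) hy

theorem tendsto_intervalIntegral_mul_comp_sub {h g : ℝ → ℝ} {c C : ℝ}
    (hh : IntegrableOn h (Ioi 0)) (hg : AEStronglyMeasurable g)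
    (hgC : ∀ x > 0, |g x| ≤ C) (hgc : Tendsto g atTop (𝓝 c)) :
    Tendsto (fun b => ∫ z in 0..b, h z * g (b - z)) atTop
      (𝓝 ((∫ z in Ioi 0, h z) * c)) := by
  set F : ℝ → ℝ → ℝ := fun b => (Iio b).indicator fun z => h z * g (b - z)
  have hF : ∀ b, 0 ≤ b → ∫ z in Ioi 0, F b z = ∫ z in 0..b, h z * g (b - z) := by
    intro b hb
    rw [intervalIntegral.integral_of_le hb, integral_Ioc_eq_integral_Ioo,
      setIntegral_indicator measurableSet_Iio, Ioi_inter_Iio]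
  have hC : 0 ≤ C := (abs_nonneg _).trans (hgC 1 one_pos)
  rw [← integral_mul_const]
  refine Tendsto.congr' ((eventually_ge_atTop 0).mono hF) ?_
  refine tendsto_integral_filter_of_dominated_convergence (fun z => |h z| * C)
    (Eventually.of_forall fun b => ?_) (Eventually.of_forall fun b => ?_)
    (hh.norm.mul_const C) (Eventually.of_forall fun z => ?_)
  · exact (hh.aestronglyMeasurable.mul
      (hg.comp_measurePreserving (volume.measurePreserving_sub_left b)).restrict).indicator
      measurableSet_Iio
  · filter_upwards [ae_restrict_mem measurableSet_Ioi] with z hz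
    by_cases hzb : z < b
    · simp only [F, indicator_of_mem (mem_Iio.mpr hzb), Real.norm_eq_abs, abs_mul]
      exact mul_le_mul_of_nonneg_left (hgC _ (sub_pos.mpr hzb)) (abs_nonneg _)
    · simp only [F, indicator_of_notMem (mt mem_Iio.mp hzb), norm_zero]
      positivity
  · have hshift : Tendsto (fun b => g (b - z)) atTop (𝓝 c) :=
      hgc.comp (tendsto_atTop_add_const_right _ (-z) tendsto_id)
    refine (hshift.const_mul (h z)).congr' ?_
    filter_upwards [eventually_gt_atTop z] with b hb
    simp [F, hb]

theorem integral_Ioi_exp_mul_sub_exp_mul {a b : ℝ} (ha : a < 0) (hb : b < 0) :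
    ∫ z in Ioi 0, (Real.exp (a * z) - Real.exp (b * z)) = 1 / b - 1 / a := by
  rw [integral_sub (integrableOn_exp_mul_Ioi ha 0) (integrableOn_exp_mul_Ioi hb 0),
    integral_exp_mul_Ioi ha, integral_exp_mul_Ioi hb]
  simp only [mul_zero, Real.exp_zero]
  ring

open Real in
theorem intervalIntegral_exp_sub_exp_mul_comp_sub {V : ℝ → ℝ} (hV : LocallyIntegrable V volume)
    (Φ Φ' b : ℝ) :
    ∫ z in 0..b, (exp ((Φ - Φ') * z) - exp (-Φ' * z)) * (exp (-Φ' * (b - z)) * V (b - z))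
      = exp (-Φ' * b) * ((∫ z in 0..b, exp (Φ * z) * V (b - z)) - ∫ z in 0..b, V z) := by
  have hVb : IntervalIntegrable (fun z => V (b - z)) volume 0 b := by
    simpa using (hV.integrableOn_isCompact isCompact_uIcc).intervalIntegrable.comp_sub_left
      (a := b) (b := 0) b
  have hexpV : IntervalIntegrable (fun z => exp (Φ * z) * V (b - z)) volume 0 b :=
    hVb.continuousOn_mul (by fun_prop)
  have hpt : ∀ z, (exp ((Φ - Φ') * z) - exp (-Φ' * z)) * (exp (-Φ' * (b - z)) * V (b - z))
      = exp (-Φ' * b) * (exp (Φ * z) * V (b - z) - V (b - z)) := by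
    intro z
    have e1 : exp ((Φ - Φ') * z) * exp (-Φ' * (b - z)) = exp (-Φ' * b) * exp (Φ * z) := by
      rw [← exp_add, ← exp_add]; ring_nf
    have e2 : exp (-Φ' * z) * exp (-Φ' * (b - z)) = exp (-Φ' * b) := by
      rw [← exp_add]; ring_nf
    linear_combination V (b - z) * (e1 - e2)
  rw [intervalIntegral.integral_congr fun z _ => hpt z, intervalIntegral.integral_const_mul,
    intervalIntegral.integral_sub hexpV hVb, intervalIntegral.integral_comp_sub_left]
  simp

theorem stmt_16_general (r Φ Φ' c' : ℝ) (hΦ : 0 < Φ) (hΦΦ' : Φ < Φ') (hc' : 0 < c')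
    (V : ℝ → ℝ) (hVnn : ∀ x, 0 ≤ V x)
    (hVli : LocallyIntegrable V volume)
    (hVmono : MonotoneOn (fun x => Real.exp (-Φ' * x) * V x) (Set.Ioi 0))
    (hVlim : Tendsto (fun x => Real.exp (-Φ' * x) * V x) atTop (nhds c')) :
    Tendsto (fun b => (Real.exp (Φ * b)
        + r * (∫ z in (0:ℝ)..b, Real.exp (Φ * z) * V (b - z))
        - r * ∫ z in (0:ℝ)..b, V z) / V b)
      atTop (nhds (r * Φ / ((Φ' - Φ) * Φ'))) := by
  set g : ℝ → ℝ := fun x => Real.exp (-Φ' * x) * V x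
  set h : ℝ → ℝ := fun z => Real.exp ((Φ - Φ') * z) - Real.exp (-Φ' * z)
  have hg_bound : ∀ x > 0, |g x| ≤ c' := fun x hx => by
    rw [abs_of_nonneg (mul_nonneg (Real.exp_pos _).le (hVnn x))]
    exact hVmono.ge_of_tendsto hVlim hx
  have hg_meas : AEStronglyMeasurable g :=
    (by fun_prop : Continuous fun x => Real.exp (-Φ' * x)).aestronglyMeasurable.mul
      hVli.aestronglyMeasurable
  have hh_int : IntegrableOn h (Ioi 0) :=
    (integrableOn_exp_mul_Ioi (by linarith) 0).sub (integrableOn_exp_mul_Ioi (by linarith) 0)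
  have hh_eq : ∫ z in Ioi 0, h z = Φ / ((Φ' - Φ) * Φ') := by
    rw [integral_Ioi_exp_mul_sub_exp_mul (by linarith) (by linarith)]
    field_simp [show Φ - Φ' ≠ 0 by linarith, show Φ' - Φ ≠ 0 by linarith,
      show Φ' ≠ 0 by linarith]
    ring
  have hquot : ∀ b, (Real.exp (Φ * b) + r * (∫ z in (0:ℝ)..b, Real.exp (Φ * z) * V (b - z))
        - r * ∫ z in (0:ℝ)..b, V z) / V b
      = (Real.exp ((Φ - Φ') * b) + r * ∫ z in 0..b, h z * g (b - z)) / g b := by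
    intro b
    have hexp_b : Real.exp ((Φ - Φ') * b) = Real.exp (-Φ' * b) * Real.exp (Φ * b) := by
      rw [← Real.exp_add]; ring_nf
    rw [show (∫ z in 0..b, h z * g (b - z)) = _ from
      intervalIntegral_exp_sub_exp_mul_comp_sub hVli Φ Φ' b, hexp_b,
      ← mul_div_mul_left _ (V b) (Real.exp_ne_zero (-Φ' * b))]
    congr 1
    ring
  have hexp : Tendsto (fun b => Real.exp ((Φ - Φ') * b)) atTop (𝓝 0) :=
    Real.tendsto_exp_atBot.comp (tendsto_id.const_mul_atTop_of_neg (by linarith))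
  have hlim := (hexp.add ((tendsto_intervalIntegral_mul_comp_sub hh_int hg_meas hg_bound
    hVlim).const_mul r)).div hVlim hc'.ne'
  rw [hh_eq, zero_add, mul_comm _ c', mul_left_comm, mul_div_cancel_left₀ _ hc'.ne',
    ← mul_div_assoc] at hlim
  exact hlim.congr fun b => (hquot b).symm

/-- convergence of `I_{-∞}^{(q,r)}(b)/W^{(q+r)}(b)` as `b → ∞`
(proof of Corollary 3.2(iii)). -/
theorem stmt_16 (r Φ Φ' c' : ℝ) (hr : 0 < r) (hΦ : 0 < Φ) (hΦΦ' : Φ < Φ') (hc' : 0 < c')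
    (V : ℝ → ℝ) (hVnn : ∀ x, 0 ≤ V x) (hV0 : ∀ x < 0, V x = 0)
    (hVli : LocallyIntegrable V volume)
    (hVmono : MonotoneOn (fun x => Real.exp (-Φ' * x) * V x) (Set.Ioi 0))
    (hVlim : Tendsto (fun x => Real.exp (-Φ' * x) * V x) atTop (nhds c')) :
    Tendsto (fun b => (Real.exp (Φ * b)
        + r * (∫ z in (0:ℝ)..b, Real.exp (Φ * z) * V (b - z))
        - r * ∫ z in (0:ℝ)..b, V z) / V b)
      atTop (nhds (r * Φ / ((Φ' - Φ) * Φ'))) :=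
  stmt_16_general r Φ Φ' c' hΦ hΦΦ' hc' V hVnn hVli hVmono hVlim
end
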